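/- arXiv:1701.08871 — 7 statements merged into one kernel-verified Lean document; each statement's English description precedes it below -/
import Mathlib

section
/- Let q = p^n be a prime power, d ≥ 1, ζ ∈ ℂ a primitive q-th root of unity, and f : ℤ/dℤ → ℤ/qℤ a function such that the d×d matrix H with H_{ij} = ζ^{f(i−j)} is a q-Butson Hadamard matrix. Then f is δ-fibrous. -/
open Polynomial Finset


/-- `H` is a `q`-Butson Hadamard matrix: every entry is a `q`-th root of unity
and `H * Hᴴ = d • I`. -/
def IsButsonHadamard (q d : ℕ) (H : Matrix (Fin d) (Fin d) ℂ) : Prop :=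
  (∀ i j, H i j ^ q = 1) ∧
    H * H.conjTranspose = (d : ℂ) • (1 : Matrix (Fin d) (Fin d) ℂ)

/-- `g : X → ZMod (p^n)` is fibrous: the cardinality of each fiber `g⁻¹(b)`
depends only on `b` modulo `p^(n-1)`. -/
def Fibrous (p n : ℕ) {X : Type*} (g : X → ZMod (p ^ n)) : Prop :=
  ∀ b b' : ZMod (p ^ n), b.val % p ^ (n - 1) = b'.val % p ^ (n - 1) →
    Nat.card {x // g x = b} = Nat.card {x // g x = b'}

/-- `f : ZMod d → ZMod (p^n)` is δ-fibrous: for every `k ≠ 0` the difference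
function `x ↦ f (x + k) - f x` is fibrous. -/
def DeltaFibrous (p n d : ℕ) (f : ZMod d → ZMod (p ^ n)) : Prop :=
  ∀ k : ZMod d, k ≠ 0 → Fibrous p n (fun x => f (x + k) - f x)

/-- If `ζ` is a primitive `p^n`-th root of unity and the matrix
`H i j = ζ ^ f (i - j)` is a `p^n`-Butson Hadamard matrix, then `f` is
δ-fibrous. -/
theorem deltaFibrous_of_circulant_butson (p n d : ℕ) (hp : p.Prime)
    (hd : 0 < d) (ζ : ℂ) (hζ : IsPrimitiveRoot ζ (p ^ n))
    (f : ZMod d → ZMod (p ^ n))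
    (hH : IsButsonHadamard (p ^ n) d
      (Matrix.of fun i j : Fin d =>
        ζ ^ (f (((i : ℕ) : ZMod d) - ((j : ℕ) : ZMod d))).val)) :
    DeltaFibrous p n d f := by
  classical
  intro k hk
  haveI : NeZero d := ⟨hd.ne'⟩
  rcases n with _ | m
  · haveI : Subsingleton (ZMod (p ^ 0)) := by rw [pow_zero]; infer_instance
    intro b b' _
    rw [Subsingleton.elim b b']
  have hq : 0 < p ^ (m + 1) := pow_pos hp.pos _
  haveI : NeZero (p ^ (m + 1)) := ⟨hq.ne'⟩
  have hepos : 0 < p ^ m := pow_pos hp.pos m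
  set g : ZMod d → ZMod (p ^ (m + 1)) := fun x => f (x + k) - f x with hgdef
  -- basic facts about ζ
  have hζq : ζ ^ (p ^ (m + 1)) = 1 := hζ.pow_eq_one
  have hζ0 : ζ ≠ 0 := by
    intro h; rw [h, zero_pow hq.ne'] at hζq; exact zero_ne_one hζq
  have hmod : ∀ t : ℕ, ζ ^ (t % p ^ (m + 1)) = ζ ^ t := by
    intro t
    conv_rhs => rw [← Nat.mod_add_div t (p ^ (m + 1)), pow_add, pow_mul, hζq, one_pow, mul_one]
  have hadd : ∀ a b : ZMod (p ^ (m + 1)), ζ ^ (a + b).val = ζ ^ a.val * ζ ^ b.val := by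
    intro a b
    rw [ZMod.val_add, hmod, pow_add]
  have habs : ‖ζ‖ = 1 := Complex.norm_eq_one_of_pow_eq_one hζq hq.ne'
  have hconj : ∀ a b : ZMod (p ^ (m + 1)),
      ζ ^ a.val * (starRingEnd ℂ) (ζ ^ b.val) = ζ ^ (a - b).val := by
    intro a b
    rw [← Complex.inv_eq_conj (by rw [norm_pow, habs, one_pow]),
      inv_eq_one_div, mul_one_div, div_eq_iff (pow_ne_zero _ hζ0), ← hadd, sub_add_cancel]
  -- the orthogonality sum
  have hsum : ∑ x : ZMod d, ζ ^ (g x).val = 0 := by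
    obtain ⟨h1, h2⟩ := hH
    set i : Fin d := ⟨k.val, ZMod.val_lt k⟩ with hi
    set j : Fin d := ⟨0, hd⟩ with hj
    have hne : i ≠ j := by
      intro h
      exact hk (((ZMod.val_eq_zero k).mp (congrArg Fin.val h)))
    have horth := congrFun (congrFun h2 i) j
    rw [Matrix.mul_apply] at horth
    simp only [Matrix.conjTranspose_apply, Matrix.of_apply, Matrix.smul_apply,
      Matrix.one_apply_ne hne, smul_zero] at horth
    have hci : ((i : ℕ) : ZMod d) = k := ZMod.natCast_rightInverse k
    have hcj : ((j : ℕ) : ZMod d) = 0 := by simp [hj]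
    rw [← horth]
    have hbij0 : Function.Bijective (fun l : Fin d => ((l : ℕ) : ZMod d)) := by
      rw [Fintype.bijective_iff_injective_and_card]
      constructor
      · intro l1 l2 h
        have := congrArg ZMod.val h
        rwa [ZMod.val_cast_of_lt l1.isLt, ZMod.val_cast_of_lt l2.isLt, Fin.val_inj] at this
      · simp [ZMod.card]
    have hbij : Function.Bijective (fun l : Fin d => -((l : ℕ) : ZMod d)) :=
      (Equiv.neg (ZMod d)).bijective.comp hbij0
    refine (Fintype.sum_bijective _ hbij _ _ fun l => ?_).symm
    have hstar : ∀ z : ℂ, star z = (starRingEnd ℂ) z := fun z => rfl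
    rw [hstar, hci, hcj, hconj]
    congr 1
    have e1 : k - ((l : ℕ) : ZMod d) = -((l : ℕ) : ZMod d) + k := by ring
    have e2 : (0 : ZMod d) - ((l : ℕ) : ZMod d) = -((l : ℕ) : ZMod d) := by ring
    rw [e1, e2]
  -- the polynomial
  set P : ℚ[X] := ∑ x : ZMod d, X ^ (g x).val with hPdef
  have hPcoeff : ∀ t : ℕ,
      P.coeff t = ((univ.filter fun x : ZMod d => t = (g x).val).card : ℚ) := by
    intro t
    rw [hPdef, finset_sum_coeff]
    have hco : ∀ x : ZMod d, (X ^ (g x).val : ℚ[X]).coeff t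
        = if t = (g x).val then 1 else 0 := fun x => coeff_X_pow _ _
    rw [Finset.sum_congr rfl fun x _ => hco x, Finset.sum_boole]
  have hPeval : aeval ζ P = 0 := by
    rw [hPdef, map_sum]
    simpa using hsum
  have hdvd : cyclotomic (p ^ (m + 1)) ℚ ∣ P := by
    rw [cyclotomic_eq_minpoly_rat hζ hq]
    exact minpoly.dvd ℚ ζ hPeval
  obtain ⟨Q, hQ⟩ := hdvd
  -- degree bound on Q
  have hQcoeff : ∀ t : ℕ, p ^ m ≤ t → Q.coeff t = 0 := by
    intro t ht
    rcases eq_or_ne Q 0 with h0 | h0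
    · simp [h0]
    have hPdeg : P.natDegree ≤ p ^ (m + 1) - 1 := by
      rw [natDegree_le_iff_coeff_eq_zero]
      intro N hN
      rw [hPcoeff]
      have : (univ.filter fun x : ZMod d => N = (g x).val) = ∅ := by
        refine Finset.filter_false_of_mem fun x _ => ?_
        have := ZMod.val_lt (g x)
        omega
      simp [this]
    have hcyc0 : cyclotomic (p ^ (m + 1)) ℚ ≠ 0 := cyclotomic_ne_zero _ ℚ
    have hdeg : P.natDegree = (p ^ (m + 1)).totient + Q.natDegree := by
      rw [hQ, natDegree_mul hcyc0 h0, natDegree_cyclotomic]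
    have htot : (p ^ (m + 1)).totient = p ^ (m + 1) - p ^ m := by
      rw [Nat.totient_prime_pow hp (Nat.succ_pos m), Nat.succ_sub_one,
        Nat.mul_sub, mul_one, ← pow_succ]
    have hQdeg : Q.natDegree < p ^ m := by
      have h1 : p ^ m ≤ p ^ (m + 1) :=
        Nat.pow_le_pow_right hp.pos (Nat.le_succ m)
      omega
    exact coeff_eq_zero_of_natDegree_lt (lt_of_lt_of_le hQdeg ht)
  -- coefficient extraction
  have hmain : ∀ t : ℕ, t < p ^ (m + 1) → P.coeff t = Q.coeff (t % p ^ m) := by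
    intro t ht
    rw [hQ, cyclotomic_prime_pow_eq_geom_sum hp, Finset.sum_mul, finset_sum_coeff]
    have hterm : ∀ i : ℕ, ((X ^ p ^ m) ^ i * Q).coeff t =
        if p ^ m * i ≤ t then Q.coeff (t - p ^ m * i) else 0 := by
      intro i
      rw [mul_comm, ← pow_mul, coeff_mul_X_pow']
    have hdlt : t / p ^ m < p := by
      rw [Nat.div_lt_iff_lt_mul hepos, mul_comm]
      rwa [pow_succ] at ht
    have h5 := Nat.div_add_mod t (p ^ m)
    have h6 : t % p ^ m < p ^ m := Nat.mod_lt t hepos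
    rw [Finset.sum_eq_single (t / p ^ m)]
    · rw [hterm, if_pos (Nat.mul_div_le t (p ^ m))]
      congr 1
      rw [Nat.sub_eq_iff_eq_add (Nat.mul_div_le t (p ^ m)), add_comm]
      exact (Nat.div_add_mod t _).symm
    · intro i _ hine
      rw [hterm]
      split_ifs with hle
      · apply hQcoeff
        have hilt : i < t / p ^ m := by
          rcases Nat.lt_or_ge i (t / p ^ m) with h | h
          · exact h
          · exfalso
            have h7 : t / p ^ m < i := lt_of_le_of_ne h (Ne.symm hine)
            have h8 : p ^ m * (t / p ^ m + 1) ≤ p ^ m * i := Nat.mul_le_mul_left _ h7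
            have h9 : p ^ m * (t / p ^ m + 1) = p ^ m * (t / p ^ m) + p ^ m := by ring
            omega
        have h8 : p ^ m * (i + 1) ≤ p ^ m * (t / p ^ m) := Nat.mul_le_mul_left _ hilt
        have h9 : p ^ m * (i + 1) = p ^ m * i + p ^ m := by ring
        have h10 : p ^ m + p ^ m * i ≤ t := by
          have h11 := le_trans h8 (Nat.mul_div_le t (p ^ m))
          omega
        exact Nat.le_sub_of_add_le h10
      · rfl
    · intro h
      exact absurd (Finset.mem_range.mpr hdlt) h
  -- conclusion
  intro b b' hbb'
  have hcard : ∀ c : ZMod (p ^ (m + 1)),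
      (Nat.card {x // g x = c} : ℚ) = P.coeff c.val := by
    intro c
    have hflt : (univ.filter fun x : ZMod d => c.val = (g x).val)
        = (univ.filter fun x : ZMod d => g x = c) :=
      Finset.filter_congr fun x _ => by
        constructor
        · exact fun h => ZMod.val_injective _ h.symm
        · exact fun h => (congrArg ZMod.val h).symm
    rw [hPcoeff, hflt, Nat.card_eq_fintype_card, Fintype.card_subtype]
  have hfin : (Nat.card {x // g x = b} : ℚ) = (Nat.card {x // g x = b'} : ℚ) := by
    rw [hcard, hcard, hmain _ (ZMod.val_lt b), hmain _ (ZMod.val_lt b')]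
    rw [show b.val % p ^ m = b'.val % p ^ m from hbb']
  exact_mod_cast hfin
end

section
/- Let p be a prime, n ≥ 1, and ζ ∈ ℂ a primitive p^n-th root of unity. If b_0, …, b_{p^n−1} are rational numbers with Σ_{k < p^n} b_k ζ^k = 0, then b_k depends only on k mod p^{n−1}; that is, b_j = b_k whenever j ≡ k (mod p^{n−1}). -/
lemma aux_sum_range_mul {M : Type*} [AddCommMonoid M] (m s : ℕ) (f : ℕ → M) :
    ∑ k ∈ Finset.range (m * s), f k
      = ∑ i ∈ Finset.range s, ∑ r ∈ Finset.range m, f (i * m + r) := by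
  induction s with
  | zero => simp
  | succ s ih =>
    rw [Nat.mul_succ, Finset.sum_range_add, ih, Finset.sum_range_succ]
    congr 1
    refine Finset.sum_congr rfl fun r _ ↦ ?_
    rw [mul_comm]

/-- If `ζ` is a primitive `p^n`-th root of unity and rational numbers `b k`
for `k < p^n` satisfy `∑ b k ζ^k = 0`, then `b k` depends only on
`k mod p^(n-1)`. -/
theorem coeff_depends_only_on_residue (p n : ℕ) (hp : p.Prime) (hn : 1 ≤ n)
    (ζ : ℂ) (hζ : IsPrimitiveRoot ζ (p ^ n)) (b : ℕ → ℚ)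
    (hsum : ∑ k ∈ Finset.range (p ^ n), (b k : ℂ) * ζ ^ k = 0) :
    ∀ j k, j < p ^ n → k < p ^ n → j % p ^ (n - 1) = k % p ^ (n - 1) →
      b j = b k := by
  set m := p ^ (n - 1) with hm
  have hm0 : 0 < m := pow_pos hp.pos _
  have hq : p ^ n = m * p := by rw [hm, ← pow_succ]; congr 1; omega
  have hζp : IsPrimitiveRoot (ζ ^ m) p := hζ.pow (pow_pos hp.pos n) hq
  have hgeo : ∑ i ∈ Finset.range p, (ζ ^ m) ^ i = 0 := hζp.geom_sum_eq_zero hp.one_lt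
  have hζm0 : (ζ : ℂ) ^ m ≠ 0 := by
    intro h
    have h1 := hζp.pow_eq_one
    rw [h, zero_pow hp.pos.ne'] at h1
    exact zero_ne_one h1
  -- the averaged relation is zero
  have hsum2 : ∑ k ∈ Finset.range (p ^ n), ((b (k % m) : ℂ)) * ζ ^ k = 0 := by
    rw [hq, aux_sum_range_mul]
    have : ∀ i ∈ Finset.range p, ∑ r ∈ Finset.range m,
        ((b ((i * m + r) % m) : ℂ)) * ζ ^ (i * m + r)
        = (ζ ^ m) ^ i * ∑ r ∈ Finset.range m, (b r : ℂ) * ζ ^ r := by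
      intro i _
      rw [Finset.mul_sum]
      refine Finset.sum_congr rfl fun r hr ↦ ?_
      have hrm : r < m := Finset.mem_range.mp hr
      rw [mul_comm i m, Nat.mul_add_mod, Nat.mod_eq_of_lt hrm, pow_add, pow_mul]
      ring
    rw [Finset.sum_congr rfl this, ← Finset.sum_mul, hgeo, zero_mul]
  -- difference relation
  set c : ℕ → ℚ := fun t ↦ b (m + t) - b ((m + t) % m) with hc
  set M := m * (p - 1) with hM
  have hmM : p ^ n = m + M := by
    rw [hq, hM]
    have := hp.two_le
    nlinarith [Nat.sub_add_cancel (by omega : 1 ≤ p)]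
  have hrel : ∑ t ∈ Finset.range M, (c t : ℂ) * ζ ^ t = 0 := by
    have hdiff : ∑ k ∈ Finset.range (p ^ n),
        (((b k - b (k % m) : ℚ)) : ℂ) * ζ ^ k = 0 := by
      push_cast
      simp only [sub_mul]
      rw [Finset.sum_sub_distrib, hsum, hsum2, sub_zero]
    rw [hmM, Finset.sum_range_add] at hdiff
    have h1 : ∑ k ∈ Finset.range m, (((b k - b (k % m) : ℚ)) : ℂ) * ζ ^ k = 0 := by
      refine Finset.sum_eq_zero fun k hk ↦ ?_
      rw [Nat.mod_eq_of_lt (Finset.mem_range.mp hk)]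
      simp
    rw [h1, zero_add] at hdiff
    have h2 : ∑ t ∈ Finset.range M, (((b (m + t) - b ((m + t) % m) : ℚ)) : ℂ) * ζ ^ (m + t)
        = ζ ^ m * ∑ t ∈ Finset.range M, (c t : ℂ) * ζ ^ t := by
      rw [Finset.mul_sum]
      refine Finset.sum_congr rfl fun t _ ↦ ?_
      rw [pow_add, hc]
      push_cast
      ring
    rw [h2] at hdiff
    exact (mul_eq_zero.mp hdiff).resolve_left hζm0
  -- polynomial argument : c t = 0 for t < M
  have hczero : ∀ t < M, c t = 0 := by
    set f : Polynomial ℚ := ∑ t ∈ Finset.range M, Polynomial.C (c t) * Polynomial.X ^ t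
      with hf
    have hcoeff : ∀ t, t < M → f.coeff t = c t := by
      intro t ht
      rw [hf, Polynomial.finset_sum_coeff]
      simp only [Polynomial.coeff_C_mul, Polynomial.coeff_X_pow]
      rw [Finset.sum_eq_single t (fun s _ hst => by simp [Ne.symm hst])
        (fun h => absurd (Finset.mem_range.mpr ht) h)]
      simp
    have haev : Polynomial.aeval ζ f = 0 := by
      rw [hf, map_sum, ← hrel]
      refine Finset.sum_congr rfl fun t _ ↦ ?_
      simp [map_mul, map_pow, Polynomial.aeval_C, Polynomial.aeval_X, eq_ratCast]
    have hfdeg : f.degree < (M : WithBot ℕ) := by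
      rw [hf]
      refine lt_of_le_of_lt (Polynomial.degree_sum_le _ _) ?_
      rw [Finset.sup_lt_iff (by exact_mod_cast WithBot.bot_lt_coe M)]
      intro t ht
      refine lt_of_le_of_lt (Polynomial.degree_C_mul_X_pow_le _ _) ?_
      exact_mod_cast Finset.mem_range.mp ht
    have hf0 : f = 0 := by
      by_contra hf0
      have hle := minpoly.degree_le_of_ne_zero ℚ ζ hf0 haev
      have hmin : (minpoly ℚ ζ).degree = (M : WithBot ℕ) := by
        rw [← Polynomial.cyclotomic_eq_minpoly_rat hζ (pow_pos hp.pos n),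
          Polynomial.degree_eq_natDegree (Polynomial.cyclotomic_ne_zero _ ℚ),
          Polynomial.natDegree_cyclotomic, Nat.totient_prime_pow hp (by omega)]
      rw [hmin] at hle
      exact absurd (lt_of_le_of_lt hle hfdeg) (lt_irrefl _)
    intro t ht
    rw [← hcoeff t ht, hf0, Polynomial.coeff_zero]
  -- conclude
  have key : ∀ k < p ^ n, b k = b (k % m) := by
    intro k hk
    rcases lt_or_ge k m with h | h
    · rw [Nat.mod_eq_of_lt h]
    · have ht : k - m < M := by omega
      have h2 : b (m + (k - m)) - b ((m + (k - m)) % m) = 0 := hczero (k - m) ht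
      have hk' : m + (k - m) = k := by omega
      rw [hk'] at h2
      linarith
  intro j k hj hk hmod
  rw [key j hj, key k hk, hmod]
end

section
/- Let p be a prime, n ≥ 1, ζ ∈ ℂ a primitive p^n-th root of unity, X a finite set, and g : X → ℤ/p^nℤ a function. Then g is fibrous if and only if Σ_{x ∈ X} ζ^{g(x)} = 0. -/
open Finset Polynomial

private lemma sum_range_mul' {M : Type*} [AddCommMonoid M] (f : ℕ → M) (m : ℕ) :
    ∀ q, ∑ k ∈ range (q * m), f k = ∑ j ∈ range q, ∑ a ∈ range m, f (j * m + a) := by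
  intro q
  induction q with
  | zero => simp
  | succ q ih =>
      rw [Nat.succ_mul, Finset.sum_range_add, ih, Finset.sum_range_succ]


/-- For a finite set `X`, a function `g : X → ZMod (p^n)` and a primitive
`p^n`-th root of unity `ζ`, the function `g` is fibrous iff
`∑_{x ∈ X} ζ^{g x} = 0`. -/
theorem fibrous_iff_sum_eq_zero (p n : ℕ) (hp : p.Prime) (hn : 1 ≤ n)
    (ζ : ℂ) (hζ : IsPrimitiveRoot ζ (p ^ n)) (X : Type*) [Fintype X]
    (g : X → ZMod (p ^ n)) :
    Fibrous p n g ↔ ∑ x : X, ζ ^ (g x).val = 0 := by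
  classical
  have hp1 := hp.one_lt
  have hppos := hp.pos
  have hmp : p ^ (n - 1) * p = p ^ n := by
    rw [← pow_succ]; congr 1; omega
  have hNpos : 0 < p ^ n := pow_pos hppos n
  have hmpos : 0 < p ^ (n - 1) := pow_pos hppos _
  haveI : NeZero (p ^ n) := ⟨hNpos.ne'⟩
  set c : ℕ → ℕ := fun k => Nat.card {x // g x = (k : ZMod (p ^ n))} with hc
  have hcval : ∀ b : ZMod (p ^ n), Nat.card {x // g x = b} = c b.val := by
    intro b
    simp only [hc, ZMod.natCast_val, ZMod.cast_id]
  -- rewrite the sum fiberwise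
  have hsum : ∑ x : X, ζ ^ (g x).val = ∑ k ∈ range (p ^ n), (c k : ℂ) * ζ ^ k := by
    rw [← Finset.sum_fiberwise_of_maps_to (g := fun x => (g x).val) (t := range (p ^ n))
      (fun x _ => Finset.mem_range.2 (ZMod.val_lt (g x))) (fun x => ζ ^ (g x).val)]
    refine Finset.sum_congr rfl fun k hk => ?_
    rw [Finset.mem_range] at hk
    have h1 : ∀ x ∈ Finset.univ.filter (fun x => (g x).val = k), ζ ^ (g x).val = ζ ^ k := by
      intro x hx; rw [Finset.mem_filter] at hx; rw [hx.2]
    rw [Finset.sum_congr rfl h1, Finset.sum_const, nsmul_eq_mul]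
    have hiff : ∀ x, g x = ((k : ℕ) : ZMod (p ^ n)) ↔ (g x).val = k := by
      intro x
      constructor
      · intro h; rw [h, ZMod.val_cast_of_lt hk]
      · intro h
        have h2 := congrArg (Nat.cast : ℕ → ZMod (p ^ n)) h
        simp only [ZMod.natCast_val, ZMod.cast_id] at h2
        rw [h2]
    have hck : c k = (Finset.univ.filter (fun x => (g x).val = k)).card := by
      calc c k = Nat.card {x // (g x).val = k} := by
            simp only [hc]; exact Nat.card_congr (Equiv.subtypeEquivRight hiff)
        _ = _ := by rw [Nat.card_eq_fintype_card, Fintype.card_subtype]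
    rw [hck]
  -- the key vanishing lemma
  have hgeo : ∑ j ∈ range p, (ζ ^ p ^ (n - 1)) ^ j = 0 :=
    (hζ.pow hNpos hmp.symm).geom_sum_eq_zero hp1
  have vanish : ∀ d : ℕ → ℂ,
      ∑ k ∈ range (p ^ n), d (k % p ^ (n - 1)) * ζ ^ k = 0 := by
    intro d
    rw [← hmp, mul_comm (p ^ (n - 1)) p, sum_range_mul']
    have h2 : ∀ j ∈ range p,
        ∑ a ∈ range (p ^ (n - 1)), d ((j * p ^ (n - 1) + a) % p ^ (n - 1)) *
          ζ ^ (j * p ^ (n - 1) + a)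
        = (ζ ^ p ^ (n - 1)) ^ j * ∑ a ∈ range (p ^ (n - 1)), d a * ζ ^ a := by
      intro j _
      rw [Finset.mul_sum]
      refine Finset.sum_congr rfl fun a ha => ?_
      rw [Finset.mem_range] at ha
      have h1 : (j * p ^ (n - 1) + a) % p ^ (n - 1) = a := by
        rw [Nat.add_comm, Nat.add_mul_mod_self_right, Nat.mod_eq_of_lt ha]
      rw [h1, pow_add, pow_mul]
      ring
    rw [Finset.sum_congr rfl h2, ← Finset.sum_mul, hgeo, zero_mul]
  set φ := (p - 1) * p ^ (n - 1) with hφ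
  have hsplit : p ^ n = φ + p ^ (n - 1) := by
    have h3 : φ + p ^ (n - 1) = p * p ^ (n - 1) := by
      have h4 : p - 1 + 1 = p := Nat.succ_pred_eq_of_pos hppos
      calc φ + p ^ (n - 1) = (p - 1 + 1) * p ^ (n - 1) := by rw [hφ]; ring
        _ = p * p ^ (n - 1) := by rw [h4]
    rw [h3, mul_comm, hmp]
  have hmodφ : ∀ a, a < p ^ (n - 1) → (φ + a) % p ^ (n - 1) = a := by
    intro a ha
    rw [hφ, Nat.add_comm, Nat.add_mul_mod_self_right, Nat.mod_eq_of_lt ha]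
  -- the reduced representation
  set e : ℕ → ℤ := fun k => (c k : ℤ) - (c (φ + k % p ^ (n - 1)) : ℤ) with he
  have hred : ∑ k ∈ range (p ^ n), (c k : ℂ) * ζ ^ k
      = ∑ k ∈ range φ, ((e k : ℤ) : ℂ) * ζ ^ k := by
    have hv := vanish (fun r => (c (φ + r) : ℂ))
    have step : ∑ k ∈ range (p ^ n), (c k : ℂ) * ζ ^ k
        = ∑ k ∈ range (p ^ n), ((e k : ℤ) : ℂ) * ζ ^ k := by
      have h6 : ∀ k, ((e k : ℤ) : ℂ) = (c k : ℂ) - (c (φ + k % p ^ (n - 1)) : ℂ) := by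
        intro k; rw [he]; push_cast; ring
      simp only [h6, sub_mul]
      rw [Finset.sum_sub_distrib, hv, sub_zero]
    rw [step, hsplit, Finset.sum_range_add]
    have tail : ∑ a ∈ range (p ^ (n - 1)), ((e (φ + a) : ℤ) : ℂ) * ζ ^ (φ + a) = 0 := by
      refine Finset.sum_eq_zero fun a ha => ?_
      rw [Finset.mem_range] at ha
      have h7 : e (φ + a) = 0 := by
        rw [he]; simp only
        rw [hmodφ a ha]; ring
      rw [h7]; simp
    rw [tail, add_zero]
  -- now the two directions
  rw [hsum]
  constructor
  · -- fibrous → sum = 0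
    intro hf
    have hck : ∀ k < p ^ n, c k = c (k % p ^ (n - 1)) := by
      intro k hk
      have hkm : k % p ^ (n - 1) < p ^ n :=
        (Nat.mod_lt _ hmpos).trans_le (Nat.le_of_dvd hNpos ⟨p, hmp.symm⟩)
      have h5 := hf (k : ZMod (p ^ n)) ((k % p ^ (n - 1) : ℕ) : ZMod (p ^ n)) (by
        rw [ZMod.val_cast_of_lt hk, ZMod.val_cast_of_lt hkm]
        exact (Nat.mod_mod_of_dvd k (dvd_refl _)).symm)
      simpa [hc] using h5
    have h8 : ∑ k ∈ range (p ^ n), (c k : ℂ) * ζ ^ k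
        = ∑ k ∈ range (p ^ n), (c (k % p ^ (n - 1)) : ℂ) * ζ ^ k := by
      refine Finset.sum_congr rfl fun k hk => ?_
      rw [Finset.mem_range] at hk
      rw [hck k hk]
    rw [h8]
    exact vanish fun r => (c r : ℂ)
  · -- sum = 0 → fibrous
    intro hs
    rw [hred] at hs
    set f : ℚ[X] := ∑ k ∈ range φ, Polynomial.monomial k ((e k : ℚ)) with hf
    have haev : aeval ζ f = 0 := by
      rw [hf, map_sum, ← hs]
      refine Finset.sum_congr rfl fun k _ => ?_
      rw [aeval_monomial, map_intCast]
    have hfdeg : f.degree < (φ : WithBot ℕ) := by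
      rw [hf]
      refine lt_of_le_of_lt (Polynomial.degree_sum_le _ _) ?_
      rw [Finset.sup_lt_iff (by exact_mod_cast WithBot.bot_lt_coe φ)]
      intro k hk
      rw [Finset.mem_range] at hk
      exact lt_of_le_of_lt (Polynomial.degree_monomial_le k _) (by exact_mod_cast hk)
    have hf0 : f = 0 := by
      by_contra hne
      have hmin := minpoly.degree_le_of_ne_zero ℚ ζ hne haev
      rw [← Polynomial.cyclotomic_eq_minpoly_rat hζ hNpos, Polynomial.degree_cyclotomic,
        Nat.totient_prime_pow hp hn] at hmin
      have h9 : (φ : WithBot ℕ) ≤ f.degree := by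
        have h10 : p ^ (n - 1) * (p - 1) = φ := by rw [hφ]; ring
        rw [← h10]
        exact_mod_cast hmin
      exact absurd hfdeg (not_lt.2 h9)
    have hez : ∀ k < φ, e k = 0 := by
      intro k hk
      have h11 : f.coeff k = (e k : ℚ) := by
        rw [hf, Polynomial.finset_sum_coeff]
        simp only [Polynomial.coeff_monomial]
        rw [Finset.sum_ite_eq' (range φ) k (fun i => (e i : ℚ))]
        simp [hk]
      rw [hf0] at h11
      simp only [Polynomial.coeff_zero] at h11
      exact_mod_cast h11.symm
    have hconst : ∀ k < p ^ n, c k = c (φ + k % p ^ (n - 1)) := by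
      intro k hk
      rcases lt_or_ge k φ with h | h
      · have h12 := hez k h
        rw [he] at h12
        simp only at h12
        omega
      · have hkm : k - φ < p ^ (n - 1) := by omega
        have hkeq : k = φ + (k - φ) := by omega
        rw [hkeq, hmodφ _ hkm]
    intro b b' hbb'
    rw [hcval b, hcval b']
    have h1 := hconst b.val (ZMod.val_lt b)
    have h2 := hconst b'.val (ZMod.val_lt b')
    rw [h1, h2, hbb']
end

section
/- Let q = p^n be a prime power and let 0 ≤ m ≤ n, with (m, n, p) ≠ (0, 1, 2). Then there exists a circulant q-Butson Hadamard matrix of dimension d = p^{m+n} = p^m·q. -/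
/-- `H` is circulant: `H i j = a (i - j)` for some `a : ZMod d → ℂ`,
indices read modulo `d`. -/
def IsCirculant {d : ℕ} (H : Matrix (Fin d) (Fin d) ℂ) : Prop :=
  ∃ a : ZMod d → ℂ, ∀ i j, H i j = a (((i : ℕ) : ZMod d) - ((j : ℕ) : ZMod d))

open Finset ZMod

def finEquivZMod (d : ℕ) [NeZero d] : Fin d ≃ ZMod d where
  toFun j := (j : ℕ)
  invFun x := ⟨x.val, x.val_lt⟩
  left_inv j := Fin.ext (val_cast_of_lt j.isLt)
  right_inv := natCast_zmod_val

lemma sum_zmod_mul_eq_sum_sum {M : Type*} [AddCommMonoid M] (P q : ℕ) [NeZero (P * q)]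
    (f : ZMod (P * q) → M) :
    ∑ x, f x = ∑ v : Fin q, ∑ u : Fin P, f ((u + P * v : ℕ) : ZMod (P * q)) := by
  rw [← (finEquivZMod (P * q)).sum_comp,
    ← (finProdFinEquiv.trans (finCongr (mul_comm q P))).sum_comp, Fintype.sum_prod_type]
  rfl

def circulantMatrix {d : ℕ} (a : ZMod d → ℂ) : Matrix (Fin d) (Fin d) ℂ :=
  Matrix.of fun i j => a ((i : ℕ) - (j : ℕ))

lemma isCirculant_circulantMatrix {d : ℕ} (a : ZMod d → ℂ) : IsCirculant (circulantMatrix a) :=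
  ⟨a, fun _ _ => rfl⟩

lemma isButsonHadamard_circulantMatrix {q d : ℕ} [NeZero d] {a : ZMod d → ℂ}
    (hroot : ∀ x, a x ^ q = 1)
    (hcorr : ∀ s, ∑ x, a (x + s) * star (a x) = if s = 0 then (d : ℂ) else 0) :
    IsButsonHadamard q d (circulantMatrix a) := by
  refine ⟨fun i j => hroot _, ?_⟩
  ext i k
  let e : Fin d ≃ ZMod d := (finEquivZMod d).trans (Equiv.subLeft ((k : ℕ) : ZMod d))
  have hsum : ∑ j : Fin d, a ((i : ℕ) - (j : ℕ)) * star (a ((k : ℕ) - (j : ℕ)))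
      = ∑ j, a (e j + ((i : ℕ) - (k : ℕ))) * star (a (e j)) := by
    refine sum_congr rfl fun j _ => ?_
    simp only [e, Equiv.trans_apply, Equiv.subLeft_apply, sub_add_sub_cancel']
    rfl
  have hik : ((i : ℕ) : ZMod d) - (k : ℕ) = 0 ↔ i = k := by
    rw [sub_eq_zero]; exact (finEquivZMod d).injective.eq_iff
  simp only [Matrix.mul_apply, circulantMatrix, Matrix.conjTranspose_apply, Matrix.of_apply,
    Matrix.smul_apply, Matrix.one_apply, smul_eq_mul]
  rw [hsum, e.sum_comp (fun x => a (x + _) * star (a x)), hcorr]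
  simp [hik]

lemma IsButsonHadamard.of_dvd {q q' d : ℕ} {H : Matrix (Fin d) (Fin d) ℂ}
    (h : IsButsonHadamard q' d H) (hq : q' ∣ q) : IsButsonHadamard q d H := by
  obtain ⟨k, rfl⟩ := hq
  exact ⟨fun i j => by rw [pow_mul, h.1, one_pow], h.2⟩

section StdAddChar

variable {q : ℕ} [NeZero q]

lemma stdAddChar_pow_eq_one (x : ZMod q) : stdAddChar x ^ q = 1 := by
  rw [← AddChar.map_nsmul_eq_pow, nsmul_eq_mul, natCast_self, zero_mul, AddChar.map_zero_eq_one]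

lemma stdAddChar_mul_star (x y : ZMod q) :
    stdAddChar x * star (stdAddChar y) = stdAddChar (x - y) := by
  rw [stdAddChar_apply, stdAddChar_apply, stdAddChar_apply, AddChar.map_sub_eq_div, div_eq_mul_inv,
    Circle.coe_mul, Circle.coe_inv_eq_conj]
  rfl

lemma sum_range_stdAddChar_mul {P : ℕ} {t : ZMod q} (ht : (P : ZMod q) * t = 0) :
    ∑ u ∈ range P, stdAddChar ((u : ZMod q) * t) = if t = 0 then (P : ℂ) else 0 := by
  split_ifs with h
  · simp [h]
  · have hne : stdAddChar t ≠ 1 := by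
      rwa [← AddChar.map_zero_eq_one (stdAddChar (N := q)), injective_stdAddChar.ne_iff]
    have hpow : stdAddChar t ^ P = 1 := by
      rw [← AddChar.map_nsmul_eq_pow, nsmul_eq_mul, ht, AddChar.map_zero_eq_one]
    simp_rw [← nsmul_eq_mul, AddChar.map_nsmul_eq_pow]
    rw [geom_sum_eq hne, hpow, sub_self, zero_div]

end StdAddChar

section BlockSequence

variable {q : ℕ}

def blockPhase (P : ℕ) (c : ZMod q) (n : ℕ) : ZMod q :=
  (n % P : ℕ) * (n / P : ℕ) + c * (n / P : ℕ) ^ 2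

variable {P : ℕ} {c : ZMod q}

lemma blockPhase_add_mul (hP : P ≠ 0) (hc : 2 * c = P) (w v : ℕ) :
    blockPhase P c (w + P * v) = blockPhase P c w + v * w + c * v ^ 2 := by
  have hw : ((w % P : ℕ) : ZMod q) + P * (w / P : ℕ) = w := by
    rw [← Nat.cast_mul, ← Nat.cast_add, Nat.mod_add_div]
  simp only [blockPhase, Nat.add_mul_mod_self_left,
    Nat.add_mul_div_left _ _ (Nat.pos_of_ne_zero hP), Nat.cast_add]
  linear_combination ((v : ZMod q) * (w / P : ℕ)) * hc + (v : ZMod q) * hw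

lemma blockPhase_mod (hP : P ≠ 0) (hc : 2 * c = P) (n : ℕ) :
    blockPhase P c (n % (P * q)) = blockPhase P c n := by
  conv_rhs => rw [← Nat.mod_add_div n (P * q), mul_assoc, blockPhase_add_mul hP hc]
  simp

variable [NeZero q]

noncomputable def blockSequence (P : ℕ) (c : ZMod q) (x : ZMod (P * q)) : ℂ :=
  stdAddChar (blockPhase P c x.val)

lemma blockSequence_natCast (hP : P ≠ 0) (hc : 2 * c = P) (n : ℕ) :
    blockSequence P c (n : ZMod (P * q)) = stdAddChar (blockPhase P c n) := by
  rw [blockSequence, val_natCast, blockPhase_mod hP hc]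

lemma sum_blockSequence_mul_star [NeZero P] (hc : 2 * c = P) (s : ZMod (P * q)) :
    ∑ x, blockSequence P c (x + s) * star (blockSequence P c x) =
      (∑ u ∈ range P, stdAddChar (blockPhase P c (u + s.val) - blockPhase P c u)) *
        ∑ v : ZMod q, stdAddChar (v * (s.val : ZMod q)) := by
  have hP : P ≠ 0 := NeZero.ne P
  set S := s.val
  have hterm (u v : ℕ) : blockSequence P c ((u + P * v : ℕ) + s) *
      star (blockSequence P c (u + P * v : ℕ)) =
        stdAddChar (blockPhase P c (u + S) - blockPhase P c u) *
          stdAddChar ((v : ZMod q) * (S : ZMod q)) := by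
    have hs : ((u + P * v : ℕ) : ZMod (P * q)) + s = ((u + S + P * v : ℕ) : ZMod (P * q)) := by
      rw [← natCast_zmod_val s]; push_cast; ring
    rw [hs, blockSequence_natCast hP hc, blockSequence_natCast hP hc, stdAddChar_mul_star,
      blockPhase_add_mul hP hc, blockPhase_add_mul hP hc, ← AddChar.map_add_eq_mul]
    congr 1
    push_cast
    ring
  rw [sum_zmod_mul_eq_sum_sum, ← Fin.sum_univ_eq_sum_range, ← (finEquivZMod q).sum_comp,
    sum_mul_sum, sum_comm]
  exact sum_congr rfl fun u _ => sum_congr rfl fun v _ => hterm u v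

lemma sum_blockSequence_mul_star_eq [NeZero P] (hPq : P ∣ q) (hc : 2 * c = P)
    (s : ZMod (P * q)) :
    ∑ x, blockSequence P c (x + s) * star (blockSequence P c x) =
      if s = 0 then ((P * q : ℕ) : ℂ) else 0 := by
  have hP : P ≠ 0 := NeZero.ne P
  rw [sum_blockSequence_mul_star hc, AddChar.sum_mulShift _ (isPrimitive_stdAddChar q)]
  by_cases hs : s = 0
  · simp [hs]
  rw [if_neg hs]
  by_cases hS : (s.val : ZMod q) = 0
  · obtain ⟨τ, hτ⟩ : P ∣ s.val := hPq.trans ((natCast_eq_zero_iff _ _).1 hS)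
    have hPτ : (P : ZMod q) * τ = 0 := by rw [← Nat.cast_mul, ← hτ, hS]
    have hτ0 : (τ : ZMod q) ≠ 0 := by
      rw [Ne, natCast_eq_zero_iff]
      refine fun hqτ => hs ((val_eq_zero s).1 ?_)
      have hτq : τ < q := by
        have := s.val_lt
        rw [hτ] at this
        exact Nat.lt_of_mul_lt_mul_left this
      rw [hτ, Nat.eq_zero_of_dvd_of_lt hqτ hτq, mul_zero]
    have hshift (u : ℕ) : blockPhase P c (u + s.val) - blockPhase P c u = u * τ + c * τ ^ 2 := by
      rw [hτ, blockPhase_add_mul hP hc]; ring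
    simp_rw [hshift, AddChar.map_add_eq_mul, ← sum_mul, sum_range_stdAddChar_mul hPτ, if_neg hτ0,
      zero_mul]
  · rw [if_neg hS, Nat.cast_zero, mul_zero]

end BlockSequence

theorem exists_circulant_isButsonHadamard (P q : ℕ) [NeZero P] [NeZero q] (hPq : P ∣ q)
    (heven : Even (P * (q + 1))) :
    ∃ H : Matrix (Fin (P * q)) (Fin (P * q)) ℂ, IsCirculant H ∧ IsButsonHadamard q (P * q) H := by
  obtain ⟨r, hr⟩ := heven
  have hc : 2 * (r : ZMod q) = P := by
    have := congrArg (Nat.cast : ℕ → ZMod q) hr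
    push_cast [natCast_self] at this
    linear_combination -this
  exact ⟨circulantMatrix (blockSequence P r), isCirculant_circulantMatrix _,
    isButsonHadamard_circulantMatrix (fun _ => stdAddChar_pow_eq_one _)
      (sum_blockSequence_mul_star_eq hPq hc)⟩

/-- For `m ≤ n` with `(m, n, p) ≠ (0, 1, 2)`, there exists a circulant
`p^n`-Butson Hadamard matrix of dimension `p^(m+n)`. -/
theorem circulant_butson_construction (p n m : ℕ) (hp : p.Prime)
    (hmn : m ≤ n) (hexc : ¬(m = 0 ∧ n = 1 ∧ p = 2)) :
    ∃ H : Matrix (Fin (p ^ (m + n))) (Fin (p ^ (m + n))) ℂ,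
      IsCirculant H ∧ IsButsonHadamard (p ^ n) (p ^ (m + n)) H := by
  have : NeZero p := ⟨hp.ne_zero⟩
  by_cases h2 : p = 2 ∧ m = 0 ∧ 2 ≤ n
  · obtain ⟨rfl, rfl, hn⟩ := h2
    obtain ⟨k, rfl⟩ : ∃ k, n = k + 2 := ⟨n - 2, by omega⟩
    rw [show 2 ^ (0 + (k + 2)) = 2 * 2 ^ (k + 1) by ring]
    obtain ⟨H, hcirc, hH⟩ := exists_circulant_isButsonHadamard 2 (2 ^ (k + 1))
      (dvd_pow_self 2 k.succ_ne_zero) (even_two_mul _)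
    exact ⟨H, hcirc, hH.of_dvd (pow_dvd_pow 2 (k + 1).le_succ)⟩
  · rw [pow_add]
    refine exists_circulant_isButsonHadamard _ _ (pow_dvd_pow p hmn) ?_
    simp only [Nat.even_mul, Nat.even_pow, Nat.even_add_one, hp.even_iff]
    omega
end

section
/- Let q = p^n be a prime power, let H = (a_{i−j}) be a circulant q-Butson Hadamard matrix of dimension d = p^{m+n}, let ζ ∈ ℂ be a primitive d-th root of unity, and set α_0 = Σ_{j < d} a_j and α_1 = Σ_{j < d} a_j ζ^j. Then there exist a sign ε ∈ {+1, −1} and an integer r ≥ 0 such that α_0 = ε·ζ^r·α_1; in particular α_0/α_1 is a root of unity. -/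
/-!
Circulant matrices are diagonalised by additive characters: the row vector `(χ i)ᵢ` is a left
eigenvector of `H` with eigenvalue `∑ a j * χ j`, so `H * Hᴴ = d • 1` gives
`α₀ * conj α₀ = α₁ * conj α₁ = d`. Both `α`s are sums of `d`-th roots of unity, hence integers of
`K = ℚ(ζ)`; conjugation sends such a sum to the sum of the inverse roots, so `α * conj α = d` is an
identity in `𝓞 K` and holds under every embedding `K → ℂ`. In `𝓞 K` the prime `p` is associated
to a power of the prime `ζ - 1`, so one of `α₀`, `α₁` divides the other. Their quotient is then an
algebraic integer all of whose conjugates have absolute value `1`, hence a root of unity by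
Kronecker's theorem, and the roots of unity of `ℚ(ζ)` are the `±ζ ^ r`.
-/

open ComplexConjugate Matrix NumberField IntermediateField
open scoped ComplexOrder

theorem Fin.sum_univ_natCast_zmod {M : Type*} [AddCommMonoid M] {d : ℕ} [NeZero d]
    (f : ZMod d → M) : ∑ i : Fin d, f (i : ℕ) = ∑ t, f t := by
  refine ((Fintype.bijective_iff_injective_and_card _).2 ⟨fun i j h => ?_, by simp⟩).sum_comp f
  have := congrArg ZMod.val h
  rwa [ZMod.val_cast_of_lt i.isLt, ZMod.val_cast_of_lt j.isLt, Fin.val_inj] at this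

theorem Matrix.mul_conj_eq_of_vecMul_eq_smul {n R : Type*} [Fintype n] [DecidableEq n] [Field R]
    [StarRing R] [PartialOrder R] [StarOrderedRing R] {H : Matrix n n R} {c : R}
    (hH : H * Hᴴ = c • 1) {v : n → R} (hv : v ≠ 0) {μ : R} (hμ : v ᵥ* H = μ • v) : μ * conj μ = c := by
  have key : (v ᵥ* H) ⬝ᵥ star (v ᵥ* H) = c * (v ⬝ᵥ star v) := by
    rw [star_vecMul, dotProduct_mulVec, vecMul_vecMul, hH, vecMul_smul]
    simp [smul_dotProduct]
  rw [hμ, star_smul, smul_dotProduct, dotProduct_smul, smul_eq_mul, smul_eq_mul,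
    ← mul_assoc] at key
  exact mul_right_cancel₀ (dotProduct_self_star_eq_zero.not.2 hv) key

theorem Matrix.vecMul_addChar_of_circulant {R : Type*} [CommRing R] {d : ℕ} [NeZero d]
    {a : ZMod d → R} {H : Matrix (Fin d) (Fin d) R} (ha : ∀ i j, H i j = a ((i : ℕ) - (j : ℕ)))
    (χ : AddChar (ZMod d) R) :
    (fun i : Fin d => χ (i : ℕ)) ᵥ* H =
      (∑ i : Fin d, a (i : ℕ) * χ (i : ℕ)) • fun i : Fin d => χ (i : ℕ) := by
  ext j
  simp only [vecMul, dotProduct, ha, Pi.smul_apply, smul_eq_mul]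
  rw [Fin.sum_univ_natCast_zmod (fun t => χ t * a (t - (j : ℕ))),
    Fin.sum_univ_natCast_zmod (fun t => a t * χ t), Finset.sum_mul,
    ← Equiv.sum_comp (Equiv.addRight ((j : ℕ) : ZMod d))]
  simp [AddChar.map_add_eq_mul, mul_comm, mul_left_comm]

theorem dvd_or_dvd_of_dvd_prime_pow {M : Type*} [CommMonoidWithZero M] [IsCancelMulZero M]
    {π x y : M} (hπ : Prime π) {N : ℕ} (hx : x ∣ π ^ N) (hy : y ∣ π ^ N) : x ∣ y ∨ y ∣ x := by
  obtain ⟨i, -, hi⟩ := (dvd_prime_pow hπ N).1 hx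
  obtain ⟨j, -, hj⟩ := (dvd_prime_pow hπ N).1 hy
  rcases le_total i j with hij | hji
  · exact .inl <| hi.dvd.trans <| (pow_dvd_pow π hij).trans hj.symm.dvd
  · exact .inr <| hj.dvd.trans <| (pow_dvd_pow π hji).trans hi.symm.dvd

namespace IsPrimitiveRoot

variable {K : Type*} [Field K] [NumberField K]

theorem exists_eq_pow_or_eq_neg_pow_of_isOfFinOrder {n : ℕ} [NeZero n]
    [IsCyclotomicExtension {n} ℚ K] {ζ x : K} (hζ : IsPrimitiveRoot ζ n) (hx : IsOfFinOrder x) :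
    ∃ r : ℕ, x = ζ ^ r ∨ x = -ζ ^ r := by
  rcases Nat.even_or_odd n with hn | hn
  · have hxo : IsPrimitiveRoot x (orderOf x) := .orderOf x
    have hlcm : n.lcm (orderOf x) = n := by
      refine (hn.eq_of_totient_eq_totient (Nat.dvd_lcm_left _ _) (le_antisymm ?_ ?_)).symm
      · exact Nat.le_of_dvd (Nat.totient_pos.2 (Nat.lcm_pos (NeZero.pos n) hx.orderOf_pos))
          (Nat.totient_dvd_of_dvd (Nat.dvd_lcm_left _ _))
      · have := hζ.lcm_totient_le_finrank hxo (Polynomial.cyclotomic.irreducible_rat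
          (Nat.lcm_pos (NeZero.pos n) hx.orderOf_pos))
        rwa [IsCyclotomicExtension.Rat.finrank n K] at this
    obtain ⟨r, -, hr⟩ := hζ.eq_pow_of_pow_eq_one
      (orderOf_dvd_iff_pow_eq_one.1 (Nat.lcm_eq_left_iff_dvd.1 hlcm))
    exact ⟨r, .inl hr.symm⟩
  · obtain ⟨r, -, hr⟩ := hζ.exists_pow_or_neg_mul_pow_of_isOfFinOrder hn hx
    exact ⟨r, hr⟩

end IsPrimitiveRoot

namespace NumberField

variable {K : Type*} [Field K] [NumberField K]

theorem RingOfIntegers.isOfFinOrder_of_forall_norm_eq_one {x : 𝓞 K}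
    (hx : ∀ φ : K →+* ℂ, ‖φ x‖ = 1) : IsOfFinOrder (x : K) :=
  have ⟨n, hn, h⟩ := Embeddings.pow_eq_one_of_norm_eq_one K ℂ (RingOfIntegers.isIntegral_coe x) hx
  isOfFinOrder_iff_pow_eq_one.2 ⟨n, hn, h⟩

theorem RingOfIntegers.isOfFinOrder_div_of_dvd {x y : 𝓞 K} (hyx : y ∣ x) (hy : y ≠ 0)
    (hxy : ∀ φ : K →+* ℂ, ‖φ x‖ = ‖φ y‖) : IsOfFinOrder ((x : K) / y) := by
  obtain ⟨c, rfl⟩ := hyx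
  have hy' : (y : K) ≠ 0 := by exact_mod_cast hy
  rw [show ((y * c : 𝓞 K) : K) = y * c from rfl, mul_div_cancel_left₀ _ hy']
  refine isOfFinOrder_of_forall_norm_eq_one fun φ => ?_
  have hφy : ‖φ y‖ ≠ 0 := by simpa using hy'
  simpa [hφy] using hxy φ

theorem RingOfIntegers.isOfFinOrder_div_of_dvd_or_dvd {x y : 𝓞 K} (h : x ∣ y ∨ y ∣ x)
    (hy : y ≠ 0) (hxy : ∀ φ : K →+* ℂ, ‖φ x‖ = ‖φ y‖) : IsOfFinOrder ((x : K) / y) := by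
  rcases h with hdvd | hdvd
  · have hx : x ≠ 0 := by
      rintro rfl
      obtain ⟨φ⟩ : Nonempty (K →+* ℂ) := inferInstance
      exact hy (by simpa using (hxy φ).symm)
    obtain ⟨n, hn, h⟩ := isOfFinOrder_iff_pow_eq_one.1
      (isOfFinOrder_div_of_dvd hdvd hx fun φ => (hxy φ).symm)
    exact isOfFinOrder_iff_pow_eq_one.2 ⟨n, hn, by rw [← inv_div, inv_pow, h, inv_one]⟩
  · exact isOfFinOrder_div_of_dvd hdvd hy hxy

end NumberField

theorem IsPrimitiveRoot.natCast_dvd_toInteger_sub_one_pow {p k : ℕ} [Fact p.Prime]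
    {K : Type*} [Field K] [NumberField K] [IsCyclotomicExtension {p ^ (k + 1)} ℚ K] {ζ : K}
    (hζ : IsPrimitiveRoot ζ (p ^ (k + 1))) :
    (p : 𝓞 K) ∣ (hζ.toInteger - 1) ^ Module.finrank ℚ K := by
  have h := IsCyclotomicExtension.Rat.map_eq_span_zeta_sub_one_pow p k hζ
  rw [Ideal.map_span, Set.image_singleton, Ideal.span_singleton_pow, map_natCast] at h
  exact Ideal.span_singleton_le_span_singleton.1 h.ge

theorem IsPrimitiveRoot.exists_eq_pow_mul_or_eq_neg_pow_mul {p k : ℕ} [Fact p.Prime]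
    {K : Type*} [Field K] [NumberField K] [IsCyclotomicExtension {p ^ (k + 1)} ℚ K] {ζ : K}
    (hζ : IsPrimitiveRoot ζ (p ^ (k + 1))) {x y : 𝓞 K} {N : ℕ} (hx : x ∣ (p : 𝓞 K) ^ N)
    (hy : y ∣ (p : 𝓞 K) ^ N) (hy0 : y ≠ 0) (hxy : ∀ φ : K →+* ℂ, ‖φ x‖ = ‖φ y‖) :
    ∃ r : ℕ, (x : K) = ζ ^ r * y ∨ (x : K) = -ζ ^ r * y := by
  have hdvd : ∀ z : 𝓞 K, z ∣ (p : 𝓞 K) ^ N →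
      z ∣ (hζ.toInteger - 1) ^ (Module.finrank ℚ K * N) := fun z hz =>
    hz.trans <| pow_mul (hζ.toInteger - 1) _ N ▸
      pow_dvd_pow_of_dvd hζ.natCast_dvd_toInteger_sub_one_pow N
  obtain ⟨r, hr⟩ := hζ.exists_eq_pow_or_eq_neg_pow_of_isOfFinOrder
    (RingOfIntegers.isOfFinOrder_div_of_dvd_or_dvd
      (dvd_or_dvd_of_dvd_prime_pow hζ.zeta_sub_one_prime (hdvd x hx) (hdvd y hy)) hy0 hxy)
  have hy' : (y : K) ≠ 0 := by exact_mod_cast hy0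
  exact ⟨r, by simpa only [div_eq_iff hy'] using hr⟩

theorem map_pow_pred_eq_conj {R : Type*} [Ring R] (ψ : R →+* ℂ) {z : R} {N : ℕ} (hN : N ≠ 0)
    (hz : z ^ N = 1) : ψ (z ^ (N - 1)) = conj (ψ z) := by
  have hψz : ψ z ^ N = 1 := by rw [← map_pow, hz, map_one]
  rw [← Complex.inv_eq_conj (Complex.norm_eq_one_of_pow_eq_one hψz hN), map_pow]
  refine eq_inv_of_mul_eq_one_left ?_
  rw [← pow_succ, Nat.sub_add_cancel (Nat.one_le_iff_ne_zero.2 hN), hψz]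

theorem dvd_and_forall_norm_sq_eq_of_sum_pow {R ι : Type*} [CommRing R] [Fintype ι]
    {ψ₀ : R →+* ℂ} (hψ₀ : Function.Injective ψ₀) {z : R} {N : ℕ} (hN : N ≠ 0) (hz : z ^ N = 1)
    (g : ι → ℕ) {c : ℕ} (hc : ψ₀ (∑ i, z ^ g i) * conj (ψ₀ (∑ i, z ^ g i)) = c) :
    (∑ i, z ^ g i) ∣ (c : R) ∧ ∀ ψ : R →+* ℂ, ‖ψ (∑ i, z ^ g i)‖ ^ 2 = c := by
  have hmul : ∀ ψ : R →+* ℂ, ψ ((∑ i, z ^ g i) * ∑ i, (z ^ (N - 1)) ^ g i) =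
      ψ (∑ i, z ^ g i) * conj (ψ (∑ i, z ^ g i)) := fun ψ => by
    simp [map_pow_pred_eq_conj ψ hN hz]
  have hprod : (∑ i, z ^ g i) * ∑ i, (z ^ (N - 1)) ^ g i = c :=
    hψ₀ (by rw [hmul, hc, map_natCast])
  refine ⟨Dvd.intro _ hprod, fun ψ => ?_⟩
  have := hmul ψ
  rw [hprod, map_natCast, Complex.mul_conj'] at this
  exact_mod_cast this.symm

theorem IsPrimitiveRoot.isCyclotomicExtension_adjoin_rat {L : Type*} [Field L] [CharZero L]
    {n : ℕ} [NeZero n] {ζ : L} (hζ : IsPrimitiveRoot ζ n) : IsCyclotomicExtension {n} ℚ ℚ⟮ζ⟯ := by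
  change IsCyclotomicExtension _ ℚ ℚ⟮ζ⟯.toSubalgebra
  rw [adjoin_simple_toSubalgebra_of_isAlgebraic
    ((hζ.isIntegral (NeZero.pos n)).tower_top (A := ℚ)).isAlgebraic]
  exact hζ.adjoin_isCyclotomicExtension ℚ

theorem ne_zero_of_mul_conj_eq_natCast {x : ℂ} {c : ℕ} [NeZero c] (h : x * conj x = c) :
    x ≠ 0 := by
  rintro rfl
  exact NeZero.ne c (by exact_mod_cast ((zero_mul _).symm.trans h).symm)

theorem IsPrimitiveRoot.exists_sum_pow_eq_pow_mul_or_eq_neg_pow_mul {p k : ℕ} [Fact p.Prime]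
    {ζ : ℂ} (hζ : IsPrimitiveRoot ζ (p ^ (k + 1))) {ι : Type*} [Fintype ι] (g₀ g₁ : ι → ℕ)
    (h₀ : (∑ i, ζ ^ g₀ i) * conj (∑ i, ζ ^ g₀ i) = ((p ^ (k + 1) : ℕ) : ℂ))
    (h₁ : (∑ i, ζ ^ g₁ i) * conj (∑ i, ζ ^ g₁ i) = ((p ^ (k + 1) : ℕ) : ℂ)) :
    ∃ r : ℕ, ∑ i, ζ ^ g₀ i = ζ ^ r * ∑ i, ζ ^ g₁ i ∨ ∑ i, ζ ^ g₀ i = -ζ ^ r * ∑ i, ζ ^ g₁ i := by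
  have : NeZero (p ^ (k + 1)) := ⟨pow_ne_zero _ (Fact.out : p.Prime).ne_zero⟩
  have := hζ.isCyclotomicExtension_adjoin_rat
  have := IsCyclotomicExtension.numberField {p ^ (k + 1)} ℚ ℚ⟮ζ⟯
  have hζK : IsPrimitiveRoot (AdjoinSimple.gen ℚ ζ) (p ^ (k + 1)) :=
    .of_map_of_injective (f := algebraMap ℚ⟮ζ⟯ ℂ) (by rwa [AdjoinSimple.algebraMap_gen])
      (algebraMap ℚ⟮ζ⟯ ℂ).injective
  let ψ₀ : 𝓞 ℚ⟮ζ⟯ →+* ℂ := (algebraMap ℚ⟮ζ⟯ ℂ).comp (algebraMap (𝓞 ℚ⟮ζ⟯) ℚ⟮ζ⟯)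
  have hψ₀inj : Function.Injective ψ₀ :=
    (algebraMap ℚ⟮ζ⟯ ℂ).injective.comp RingOfIntegers.coe_injective
  have hψ₀ω : ψ₀ hζK.toInteger = ζ := AdjoinSimple.algebraMap_gen ℚ ζ
  have hψ₀ (g : ι → ℕ) : ψ₀ (∑ i, hζK.toInteger ^ g i) = ∑ i, ζ ^ g i := by
    simp [hψ₀ω]
  obtain ⟨hdvd₀, hnorm₀⟩ := dvd_and_forall_norm_sq_eq_of_sum_pow hψ₀inj (NeZero.ne _)
    hζK.toInteger_isPrimitiveRoot.pow_eq_one g₀ (by rwa [hψ₀])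
  obtain ⟨hdvd₁, hnorm₁⟩ := dvd_and_forall_norm_sq_eq_of_sum_pow hψ₀inj (NeZero.ne _)
    hζK.toInteger_isPrimitiveRoot.pow_eq_one g₁ (by rwa [hψ₀])
  have hX₁ : ∑ i, hζK.toInteger ^ g₁ i ≠ 0 := fun h => by
    refine ne_zero_of_mul_conj_eq_natCast h₁ ?_
    rw [← hψ₀, h, map_zero]
  obtain ⟨r, hr⟩ := hζK.exists_eq_pow_mul_or_eq_neg_pow_mul (N := k + 1)
    (by exact_mod_cast hdvd₀) (by exact_mod_cast hdvd₁) hX₁ fun φ =>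
      (sq_eq_sq₀ (norm_nonneg _) (norm_nonneg _)).1
        ((hnorm₀ (φ.comp (algebraMap _ _))).trans (hnorm₁ (φ.comp (algebraMap _ _))).symm)
  refine ⟨r, ?_⟩
  simpa [← hψ₀, ψ₀] using hr.imp (congrArg (algebraMap ℚ⟮ζ⟯ ℂ)) (congrArg (algebraMap ℚ⟮ζ⟯ ℂ))

theorem exists_sign_mul_pow_mul_of_sum_rootsOfUnity {p s : ℕ} (hp : p.Prime) {ζ : ℂ}
    (hζ : IsPrimitiveRoot ζ (p ^ s)) {ι : Type*} [Fintype ι] {b₀ b₁ : ι → ℂ}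
    (hb₀ : ∀ i, b₀ i ^ p ^ s = 1) (hb₁ : ∀ i, b₁ i ^ p ^ s = 1)
    (h₀ : (∑ i, b₀ i) * conj (∑ i, b₀ i) = ((p ^ s : ℕ) : ℂ))
    (h₁ : (∑ i, b₁ i) * conj (∑ i, b₁ i) = ((p ^ s : ℕ) : ℂ)) :
    ∃ ε : ℂ, (ε = 1 ∨ ε = -1) ∧ ∃ r : ℕ, ∑ i, b₀ i = ε * ζ ^ r * ∑ i, b₁ i := by
  cases s with
  | zero =>
    simp only [pow_zero, pow_one] at hb₀ hb₁
    exact ⟨1, .inl rfl, 0, by simp [hb₀, hb₁]⟩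
  | succ k =>
    have : Fact p.Prime := ⟨hp⟩
    choose g₀ _ hg₀ using fun i => hζ.eq_pow_of_pow_eq_one (hb₀ i)
    choose g₁ _ hg₁ using fun i => hζ.eq_pow_of_pow_eq_one (hb₁ i)
    simp only [← hg₀, ← hg₁] at h₀ h₁ ⊢
    obtain ⟨r, hr | hr⟩ := hζ.exists_sum_pow_eq_pow_mul_or_eq_neg_pow_mul g₀ g₁ h₀ h₁
    · exact ⟨1, .inl rfl, r, by rw [hr, one_mul]⟩
    · exact ⟨-1, .inr rfl, r, by rw [hr, neg_one_mul]⟩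

theorem div_pow_eq_one_of_eq_sign_mul_pow_mul {K : Type*} [Field K] {x y ε ζ : K} {N r : ℕ}
    (hε : ε = 1 ∨ ε = -1) (hζ : ζ ^ N = 1) (hy : y ≠ 0) (h : x = ε * ζ ^ r * y) :
    (x / y) ^ (2 * N) = 1 := by
  rw [h, mul_div_cancel_right₀ _ hy, mul_pow, pow_mul ε, ← pow_mul ζ,
    show r * (2 * N) = N * (2 * r) by ring, pow_mul ζ, hζ, one_pow, mul_one]
  rcases hε with rfl | rfl <;> simp

/-- For a circulant `p^n`-Butson Hadamard matrix `H i j = a (i - j)` of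
dimension `d = p^(m+n)` and a primitive `d`-th root of unity `ζ`, the
eigenvalues `α₀ = ∑ a j` and `α₁ = ∑ a j ζ^j` satisfy `α₀ = ε ζ^r α₁` for some
sign `ε` and `r ≥ 0`; in particular `α₀ / α₁` is a root of unity. -/
theorem circulant_butson_alpha_ratio (p n m : ℕ) (hp : p.Prime)
    (a : ZMod (p ^ (m + n)) → ℂ)
    (H : Matrix (Fin (p ^ (m + n))) (Fin (p ^ (m + n))) ℂ)
    (ha : ∀ i j, H i j = a (((i : ℕ) : ZMod (p ^ (m + n))) -
      ((j : ℕ) : ZMod (p ^ (m + n)))))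
    (hH : IsButsonHadamard (p ^ n) (p ^ (m + n)) H)
    (ζ : ℂ) (hζ : IsPrimitiveRoot ζ (p ^ (m + n))) :
    (∃ ε : ℂ, (ε = 1 ∨ ε = -1) ∧ ∃ r : ℕ,
        (∑ j ∈ Finset.range (p ^ (m + n)), a (j : ZMod (p ^ (m + n)))) =
          ε * ζ ^ r *
            ∑ j ∈ Finset.range (p ^ (m + n)), a (j : ZMod (p ^ (m + n))) * ζ ^ j) ∧
      ∃ k : ℕ, 0 < k ∧
        ((∑ j ∈ Finset.range (p ^ (m + n)), a (j : ZMod (p ^ (m + n)))) /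
            ∑ j ∈ Finset.range (p ^ (m + n)), a (j : ZMod (p ^ (m + n))) * ζ ^ j)
          ^ k = 1 := by
  have : NeZero (p ^ (m + n)) := ⟨pow_ne_zero _ hp.ne_zero⟩
  obtain ⟨hentry, hunitary⟩ := hH
  have hroot : ∀ i : Fin (p ^ (m + n)), a (i : ℕ) ^ p ^ (m + n) = 1 := fun i => by
    have h := hentry i 0
    rw [ha, Fin.val_zero, Nat.cast_zero, sub_zero] at h
    exact orderOf_dvd_iff_pow_eq_one.1
      ((orderOf_dvd_of_pow_eq_one h).trans (pow_dvd_pow p (Nat.le_add_left n m)))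
  have heigen (χ : AddChar (ZMod (p ^ (m + n))) ℂ) :
      (∑ i : Fin _, a (i : ℕ) * χ (i : ℕ)) * conj (∑ i : Fin _, a (i : ℕ) * χ (i : ℕ)) =
        ((p ^ (m + n) : ℕ) : ℂ) :=
    mul_conj_eq_of_vecMul_eq_smul hunitary (fun h => by simpa using congrFun h 0)
      (vecMul_addChar_of_circulant ha χ)
  have h₀ := heigen 1
  have h₁ := heigen (AddChar.zmodChar _ hζ.pow_eq_one)
  simp only [AddChar.one_apply, mul_one, AddChar.zmodChar_apply'] at h₀ h₁
  obtain ⟨ε, hε, r, hr⟩ := exists_sign_mul_pow_mul_of_sum_rootsOfUnity hp hζ hroot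
    (fun i => by
      rw [mul_pow, hroot, one_mul, ← pow_mul, mul_comm, pow_mul, hζ.pow_eq_one, one_pow])
    h₀ h₁
  rw [Finset.sum_range, Finset.sum_range (fun j => a j * ζ ^ j)]
  exact ⟨⟨ε, hε, r, hr⟩, 2 * p ^ (m + n), Nat.mul_pos two_pos (NeZero.pos _),
    div_pow_eq_one_of_eq_sign_mul_pow_mul hε hζ.pow_eq_one
      (ne_zero_of_mul_conj_eq_natCast h₁) hr⟩
end

section
/- If d = 2^m is the dimension of a circulant Hadamard matrix, then m = 0 or m = 2; that is, the only powers of 2 that can be the dimension of a circulant Hadamard matrix are 1 and 4. -/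
/-!
The first column `b : ℤ/n → {±1}` of a circulant Hadamard matrix of order `n = 2 ^ m` has
perfect periodic autocorrelation. Summing the autocorrelation over all shifts gives
`(∑ b) ^ 2 = n`, so `m` is even.

For `m ≥ 4`, let `ζ` be a primitive `n`-th root of unity and put `γ = ∑ b x ζ^x`,
`γ' = ∑ b (-x) ζ^x` in `ℤ[ζ]`; the autocorrelation gives `γ γ' = n = 2 ^ m`. In `ℤ[ζ]` the element
`π = ζ - 1` is prime and `2 ~ π ^ (n/2)`, so `γ γ' ~ π ^ (m n / 2)` and one of `γ`, `γ'` is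
divisible by `π ^ n ~ 4`. Since `ζ ^ (n/2) = -1`, that element equals
`∑_{i < n/2} (b i - b (i + n/2)) ζ^i`, written in the integral basis `1, ζ, …, ζ^(n/2 - 1)` with
coefficients in `{0, ±2}`; divisibility by `4` forces all of them to vanish. Hence `γ γ' = 0`,
which contradicts `γ γ' = 2 ^ m`.
-/

open Finset Polynomial NumberField

theorem ZMod.sum_comp_val {M : Type*} [AddCommMonoid M] {n : ℕ} [NeZero n] (f : ℕ → M) :
    ∑ x : ZMod n, f x.val = ∑ k : Fin n, f k := by
  refine Fintype.sum_bijective (fun x : ZMod n ↦ (⟨x.val, x.val_lt⟩ : Fin n)) ?_ _ _ fun _ ↦ rfl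
  rw [Fintype.bijective_iff_injective_and_card]
  exact ⟨fun x y h ↦ ZMod.val_injective n (Fin.mk.inj_iff.mp h), by simp⟩

theorem sum_zsmul_pow_val_eq_sum_range_sub {R : Type*} [CommRing R] {n t : ℕ} [NeZero n]
    (hn : n = t + t) {ζ : R} (hζ : ζ ^ t = -1) (c : ZMod n → ℤ) :
    ∑ x : ZMod n, c x • ζ ^ x.val = ∑ i ∈ range t, (c i - c ↑(t + i)) • ζ ^ i := by
  have hsplit := sum_range_add (fun j ↦ c j • ζ ^ j) t t
  rw [← hn, ← Fin.sum_univ_eq_sum_range, ← ZMod.sum_comp_val (fun j ↦ c j • ζ ^ j)] at hsplit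
  simp only [ZMod.natCast_zmod_val] at hsplit
  rw [hsplit, ← sum_add_distrib]
  refine sum_congr rfl fun i _ ↦ ?_
  rw [pow_add, hζ, sub_zsmul]
  simp

theorem AddChar.sum_zsmul_mul_sum_zsmul_neg {G R : Type*} [AddCommGroup G] [Fintype G]
    [CommRing R] (ψ : AddChar G R) (f : G → ℤ) :
    (∑ x, f x • ψ x) * ∑ x, f (-x) • ψ x = ∑ d, (∑ x, f (x + d) * f x) • ψ d := by
  have hneg : ∑ x, f (-x) • ψ x = ∑ x, f x • ψ (-x) :=
    Fintype.sum_equiv (Equiv.neg G) _ _ fun x ↦ by simp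
  have hshift (y : G) : ∑ d, (f (y + d) * f y) • ψ d = ∑ x, (f x * f y) • ψ (x - y) :=
    Fintype.sum_equiv (Equiv.addLeft y) _ _ fun d ↦ by simp
  simp_rw [hneg, sum_mul_sum, sum_smul]
  rw [sum_comm, sum_comm (s := univ) (t := univ) (f := fun d x ↦ (f (x + d) * f x) • ψ d)]
  simp_rw [hshift, sub_eq_add_neg, AddChar.map_add_eq_mul, zsmul_eq_mul, Int.cast_mul]
  exact sum_congr rfl fun _ _ ↦ sum_congr rfl fun _ _ ↦ by ring

theorem Prime.pow_dvd_or_pow_dvd_of_associated_mul {M : Type*} [CommMonoidWithZero M]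
    [IsCancelMulZero M] {p x y : M} (hp : Prime p) {n k : ℕ} (h : Associated (x * y) (p ^ n))
    (hk : 2 * k ≤ n) : p ^ k ∣ x ∨ p ^ k ∣ y := by
  obtain ⟨i, -, hi⟩ := (dvd_prime_pow hp n).1 ((dvd_mul_right x y).trans h.dvd)
  obtain ⟨j, -, hj⟩ := (dvd_prime_pow hp n).1 ((dvd_mul_left y x).trans h.dvd)
  have hij : n ≤ i + j := by
    rw [← pow_dvd_pow_iff hp.ne_zero hp.not_isUnit, pow_add]
    exact h.symm.dvd.trans (hi.mul_mul hj).dvd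
  rcases le_or_gt k i with hki | hki
  · exact .inl ((pow_dvd_pow p hki).trans hi.dvd')
  · exact .inr ((pow_dvd_pow p (by omega)).trans hj.dvd')

theorem PowerBasis.dvd_coeff_of_intCast_dvd {S : Type*} [CommRing S] (pb : PowerBasis ℤ S)
    {a : ℤ} {c : ℕ → ℤ} (h : (a : S) ∣ ∑ i ∈ range pb.dim, c i • pb.gen ^ i) {i : ℕ}
    (hi : i < pb.dim) : a ∣ c i := by
  obtain ⟨w, hw⟩ := h
  rw [← Fin.sum_univ_eq_sum_range (fun i ↦ c i • pb.gen ^ i)] at hw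
  have hrepr := congrArg (fun x ↦ pb.basis.repr x ⟨i, hi⟩) hw
  simp only [fun j : Fin pb.dim ↦ show pb.gen ^ (j : ℕ) = pb.basis j by rw [pb.coe_basis]]
    at hrepr
  rw [Module.Basis.repr_sum_self, ← zsmul_eq_mul, map_zsmul] at hrepr
  exact ⟨_, hrepr⟩

namespace IsPrimitiveRoot

theorem associated_sub_one_pow_totient {A : Type*} [CommRing A] [IsDomain A] {p k : ℕ}
    [hp : Fact p.Prime] {ζ : A} (hζ : IsPrimitiveRoot ζ (p ^ (k + 1))) :
    Associated ((ζ - 1) ^ (p ^ (k + 1)).totient) (p : A) := by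
  have hpos : 0 < p ^ (k + 1) := pow_pos hp.out.pos _
  rw [← eval_one_cyclotomic_prime_pow (R := A) k, cyclotomic_eq_prod_X_sub_primitiveRoots hζ,
    eval_prod, ← hζ.card_primitiveRoots, ← Finset.prod_const]
  refine Associated.prod _ _ _ fun η hη ↦ ?_
  rw [mem_primitiveRoots hpos] at hη
  obtain ⟨i, -, rfl⟩ := hζ.eq_pow_of_pow_eq_one hη.pow_eq_one
  simpa using (hζ.associated_sub_one_pow_sub_one_of_coprime
    ((hζ.pow_iff_coprime hpos i).mp hη)).neg_right

theorem pow_two_pow_eq_neg_one {R : Type*} [CommRing R] [NoZeroDivisors R] {k : ℕ} {ζ : R}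
    (hζ : IsPrimitiveRoot ζ (2 ^ (k + 1))) : ζ ^ 2 ^ k = -1 :=
  (hζ.pow (by positivity) (pow_succ 2 k)).eq_neg_one_of_two_right

theorem sum_sign_zsmul_toInteger_pow_eq_zero_of_four_dvd {k : ℕ} {K : Type*} [Field K]
    [CharZero K] [IsCyclotomicExtension {2 ^ (k + 1)} ℚ K] {ζ : K}
    (hζ : IsPrimitiveRoot ζ (2 ^ (k + 1))) {c : ZMod (2 ^ (k + 1)) → ℤ}
    (hc : ∀ x, c x = 1 ∨ c x = -1) (h4 : (4 : 𝓞 K) ∣ ∑ x, c x • hζ.toInteger ^ x.val) :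
    ∑ x, c x • hζ.toInteger ^ x.val = 0 := by
  set pb := hζ.integralPowerBasis
  have hdim : pb.dim = 2 ^ k := by simp [pb, Nat.totient_prime_pow_succ Nat.prime_two]
  rw [sum_zsmul_pow_val_eq_sum_range_sub (by ring)
    hζ.toInteger_isPrimitiveRoot.pow_two_pow_eq_neg_one] at h4 ⊢
  rw [← hζ.integralPowerBasis_gen, ← hdim, ← Int.cast_ofNat] at h4
  refine sum_eq_zero fun i hi ↦ ?_
  have h4i := pb.dvd_coeff_of_intCast_dvd h4 (hdim ▸ mem_range.mp hi)
  rw [hdim] at h4i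
  have hi0 : c i - c ↑(2 ^ k + i) = 0 := by
    rcases hc i with h | h <;> rcases hc ↑(2 ^ k + i) with h' | h' <;> rw [h, h'] at h4i ⊢ <;>
      omega
  rw [hi0, zero_smul]

end IsPrimitiveRoot

structure IsPerfectBinary {n : ℕ} [NeZero n] (b : ZMod n → ℤ) : Prop where
  sign : ∀ x, b x = 1 ∨ b x = -1
  autocorrelation_eq_zero : ∀ d ≠ 0, ∑ x, b (x + d) * b x = 0

namespace IsPerfectBinary

theorem autocorrelation {n : ℕ} [NeZero n] {b : ZMod n → ℤ} (hb : IsPerfectBinary b)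
    (d : ZMod n) : ∑ x, b (x + d) * b x = if d = 0 then (n : ℤ) else 0 := by
  split_ifs with hd
  · have hsq (x : ZMod n) : b x * b x = 1 := by rcases hb.sign x with h | h <;> simp [h]
    simp [hd, hsq]
  · exact hb.autocorrelation_eq_zero d hd

theorem sum_sq {n : ℕ} [NeZero n] {b : ZMod n → ℤ} (hb : IsPerfectBinary b) :
    (∑ x, b x) ^ 2 = n := by
  have h := Fintype.sum_congr _ _ hb.autocorrelation
  rw [sum_ite_eq' univ (0 : ZMod n), if_pos (mem_univ _), sum_comm] at h
  rw [← h, sq, sum_mul]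
  refine sum_congr rfl fun x _ ↦ ?_
  rw [← sum_mul, mul_comm, Fintype.sum_equiv (Equiv.addLeft x) (fun y ↦ b (x + y)) b fun _ ↦ rfl]

theorem even_of_two_pow {m : ℕ} {b : ZMod (2 ^ m) → ℤ} (hb : IsPerfectBinary b) : Even m := by
  have h : (∑ x, b x).natAbs ^ 2 = 2 ^ m := by
    have := hb.sum_sq
    rw [← Int.natAbs_sq] at this
    exact_mod_cast this
  obtain ⟨j, -, hj⟩ := (Nat.dvd_prime_pow Nat.prime_two).1 (Dvd.intro_left _ h)
  rw [hj, ← pow_mul] at h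
  exact ⟨j, by have := Nat.pow_right_injective le_rfl h; omega⟩

theorem lt_four_of_isPrimitiveRoot {k : ℕ} {K : Type*} [Field K] [CharZero K]
    [IsCyclotomicExtension {2 ^ (k + 1)} ℚ K] {ζ : K} (hζ : IsPrimitiveRoot ζ (2 ^ (k + 1)))
    {b : ZMod (2 ^ (k + 1)) → ℤ} (hb : IsPerfectBinary b) : k + 1 < 4 := by
  by_contra! hk
  let ψ := AddChar.zmodChar (2 ^ (k + 1)) hζ.toInteger_isPrimitiveRoot.pow_eq_one
  have hprod : (∑ x, b x • ψ x) * ∑ x, b (-x) • ψ x = 2 ^ (k + 1) := by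
    rw [AddChar.sum_zsmul_mul_sum_zsmul_neg, Fintype.sum_eq_single 0 fun d hd ↦ by
      rw [hb.autocorrelation, if_neg hd, zero_smul], hb.autocorrelation, if_pos rfl,
      AddChar.map_zero_eq_one]
    simp
  have hπ : Prime (hζ.toInteger - 1) := hζ.zeta_sub_one_prime
  have h2 : Associated ((hζ.toInteger - 1) ^ 2 ^ k) 2 := by
    simpa [Nat.totient_prime_pow_succ Nat.prime_two] using
      hζ.toInteger_isPrimitiveRoot.associated_sub_one_pow_totient (p := 2)
  have h4 : Associated 4 ((hζ.toInteger - 1) ^ (2 * 2 ^ k)) := by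
    rw [pow_mul', show (4 : 𝓞 K) = 2 ^ 2 by norm_num]
    exact h2.pow_pow.symm
  have hassoc : Associated ((∑ x, b x • ψ x) * ∑ x, b (-x) • ψ x)
      ((hζ.toInteger - 1) ^ (2 ^ k * (k + 1))) := by
    rw [hprod, pow_mul]
    exact h2.pow_pow.symm
  have vanish {c : ZMod (2 ^ (k + 1)) → ℤ} (hc : ∀ x, c x = 1 ∨ c x = -1)
      (h : (hζ.toInteger - 1) ^ (2 * 2 ^ k) ∣ ∑ x, c x • ψ x) : ∑ x, c x • ψ x = 0 :=
    hζ.sum_sign_zsmul_toInteger_pow_eq_zero_of_four_dvd hc (h4.dvd.trans h)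
  refine pow_ne_zero (k + 1) (two_ne_zero (α := 𝓞 K)) ?_
  rcases hπ.pow_dvd_or_pow_dvd_of_associated_mul hassoc (k := 2 * 2 ^ k)
    (by nlinarith [Nat.mul_le_mul_left (2 ^ k) hk]) with h | h
  · rw [← hprod, vanish hb.sign h, zero_mul]
  · rw [← hprod, vanish (fun x ↦ hb.sign (-x)) h, mul_zero]

theorem lt_four_of_two_pow {m : ℕ} {b : ZMod (2 ^ m) → ℤ} (hb : IsPerfectBinary b) : m < 4 := by
  obtain _ | k := m
  · omega
  -- Instance search misses `CyclotomicField.isCyclotomicExtension` behind the `ℚ`-algebra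
  -- diamond on `CyclotomicField`, so the field is introduced abstractly.
  obtain ⟨K, _, _, _⟩ : ∃ (K : Type) (_ : Field K) (_ : CharZero K),
      IsCyclotomicExtension {2 ^ (k + 1)} ℚ K :=
    ⟨_, _, inferInstance, CyclotomicField.isCyclotomicExtension _ ℚ⟩
  exact hb.lt_four_of_isPrimitiveRoot (IsCyclotomicExtension.zeta_spec _ ℚ K)

end IsPerfectBinary

theorem IsCirculant.exists_isPerfectBinary {n : ℕ} [NeZero n] {H : Matrix (Fin n) (Fin n) ℂ}
    (hc : IsCirculant H) (hpm : ∀ i j, H i j = 1 ∨ H i j = -1)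
    (hH : H * H.transpose = (n : ℂ) • (1 : Matrix (Fin n) (Fin n) ℂ)) :
    ∃ b : ZMod n → ℤ, IsPerfectBinary b := by
  obtain ⟨a, ha⟩ := hc
  let i (x : ZMod n) : Fin n := ⟨x.val, x.val_lt⟩
  have ha' (x y : ZMod n) : H (i x) (i y) = a (x - y) := by simp [ha, i]
  have hsign (x : ZMod n) : ∃ z : ℤ, (z = 1 ∨ z = -1) ∧ (z : ℂ) = a x := by
    rcases hpm (i x) (i 0) with h | h <;> rw [ha', sub_zero] at h
    · exact ⟨1, .inl rfl, by simp [h]⟩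
    · exact ⟨-1, .inr rfl, by simp [h]⟩
  choose b hb hba using hsign
  refine ⟨b, ⟨hb, fun d hd ↦ Int.cast_injective (α := ℂ) ?_⟩⟩
  have hentry := congrFun (congrFun hH (i d)) (i 0)
  rw [Matrix.mul_apply, Matrix.smul_apply, Matrix.one_apply_ne (by simpa [i] using hd),
    smul_zero] at hentry
  calc ((∑ x, b (x + d) * b x : ℤ) : ℂ) = ∑ x, a (d - x) * a (-x) := by
        push_cast [hba]
        exact Fintype.sum_equiv (Equiv.neg _) _ _ fun x ↦ by simp [sub_eq_add_neg, add_comm]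
    _ = ∑ k, H (i d) k * H.transpose k (i 0) := by
        have := ZMod.sum_comp_val (n := n) fun j ↦ a (d - j) * a (-j)
        simp only [ZMod.natCast_zmod_val] at this
        simp [this, ha, i]
    _ = ((0 : ℤ) : ℂ) := by rw [hentry, Int.cast_zero]

/-- Turyn's theorem: if `2^m` is the dimension of a circulant Hadamard matrix,
then `m = 0` or `m = 2`. -/
theorem turyn (m : ℕ)
    (h : ∃ H : Matrix (Fin (2 ^ m)) (Fin (2 ^ m)) ℂ,
      IsCirculant H ∧ (∀ i j, H i j = 1 ∨ H i j = -1) ∧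
        H * H.transpose =
          ((2 ^ m : ℕ) : ℂ) • (1 : Matrix (Fin (2 ^ m)) (Fin (2 ^ m)) ℂ)) :
    m = 0 ∨ m = 2 := by
  obtain ⟨H, hc, hpm, hH⟩ := h
  obtain ⟨b, hb⟩ := hc.exists_isPerfectBinary hpm hH
  obtain ⟨j, rfl⟩ := hb.even_of_two_pow
  have := hb.lt_four_of_two_pow
  omega
end

section
/- Let q = p^n be a prime power, let H = (a_{i−j}) be a circulant q-Butson Hadamard matrix of dimension d = p^{m+n}, and let ζ ∈ ℂ be a primitive d-th root of unity. Each eigenvalue α_k = Σ_{j < d} a_j ζ^{jk} lies in ℤ[ζ], and the principal ideal (α_k) of ℤ[ζ] is a power of the unique prime ideal 𝔭 of ℤ[ζ] lying over the rational prime p; that is, there exists v_k ≥ 0 with (α_k) = 𝔭^{v_k}. -/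
/-!
Because `H` is circulant, `H * Hᴴ = d • 1` says that the autocorrelations of `a` vanish off
`0`; expanding `α_k * conj α_k` as a sum over shifts then gives `α_k * conj α_k = d = p ^ (m + n)`.
The entries of `H` are `d`-th roots of unity, hence powers of `ζ`, so `α_k` and `conj α_k` lie
in `ℤ[ζ]` and `α_k ∣ p ^ (m + n)` there. Now `ℤ[ζ] ≅ 𝓞 ℚ(ζ)` is a Dedekind domain in which
`ζ - 1` is prime, and a prime ideal containing `p` contains `ζ - 1`, since
`(ζ - 1) ^ d = ζ ^ d - 1 = 0` in characteristic `p`; so it is `(ζ - 1)`. Every prime ideal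
containing `α_k` contains `p`, so `(α_k)` is a power of `(ζ - 1)`.
-/

open ComplexConjugate NumberField IntermediateField

theorem ZMod.sum_range_natCast {M : Type*} [AddCommMonoid M] (d : ℕ) [NeZero d]
    (f : ZMod d → M) : ∑ j ∈ Finset.range d, f j = ∑ x, f x :=
  Finset.sum_nbij' (fun j => (j : ZMod d)) ZMod.val (by simp) (by simp [ZMod.val_lt])
    (fun j hj => ZMod.val_cast_of_lt (Finset.mem_range.1 hj))
    (fun x _ => ZMod.natCast_zmod_val x) (fun _ _ => rfl)

section Circulant

variable {d : ℕ} [NeZero d] {a : ZMod d → ℂ} {H : Matrix (Fin d) (Fin d) ℂ}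

theorem IsButsonHadamard.pow_eq_one_of_circulant {q : ℕ}
    (ha : ∀ i j, H i j = a ((i : ℕ) - (j : ℕ))) (hH : IsButsonHadamard q d H) (x : ZMod d) :
    a x ^ q = 1 := by
  simpa [ha] using hH.1 ⟨x.val, x.val_lt⟩ ⟨0, Nat.pos_of_neZero d⟩

theorem sum_mul_conj_eq_of_circulant (ha : ∀ i j, H i j = a ((i : ℕ) - (j : ℕ)))
    (hH : H * H.conjTranspose = (d : ℂ) • 1) (s : ZMod d) :
    ∑ x, a (s + x) * conj (a x) = if s = 0 then (d : ℂ) else 0 := by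
  let e : Fin d ≃ ZMod d := (ZMod.finEquiv d).toEquiv
  have he : ∀ i : Fin d, ((i : ℕ) : ZMod d) = e i := by
    obtain ⟨k, rfl⟩ := Nat.exists_eq_succ_of_ne_zero (NeZero.ne d)
    exact Fin.cast_val_eq_self
  have h := congrFun (congrFun hH (e.symm s)) (e.symm 0)
  simp only [Matrix.mul_apply, Matrix.conjTranspose_apply, Matrix.smul_apply, Matrix.one_apply,
    ha, he, e.apply_symm_apply, e.symm_apply_eq] at h
  rw [e.sum_comp (fun y => a (s - y) * star (a (0 - y))),
    ← Equiv.sum_comp (Equiv.neg (ZMod d))] at h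
  simpa [sub_neg_eq_add] using h

end Circulant

theorem AddChar.sum_mul_mul_conj_sum {G : Type*} [AddCommGroup G] [Fintype G] [DecidableEq G]
    (a : G → ℂ) (c : ℂ) (hcorr : ∀ s, ∑ x, a (s + x) * conj (a x) = if s = 0 then c else 0)
    (χ : AddChar G ℂ) :
    (∑ x, a x * χ x) * conj (∑ x, a x * χ x) = c := by
  have hshift : ∀ s y,
      a (s + y) * χ (s + y) * conj (a y * χ y) = a (s + y) * conj (a y) * χ s := by
    intro s y
    rw [map_mul, ← AddChar.map_neg_eq_conj,
      show χ s = χ (s + y) * χ (-y) by rw [← AddChar.map_add_eq_mul, add_neg_cancel_right]]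
    ring
  calc _ = ∑ y, ∑ x, a x * χ x * conj (a y * χ y) := by
        rw [map_sum, Finset.sum_mul_sum, Finset.sum_comm]
    _ = ∑ y, ∑ s, a (s + y) * conj (a y) * χ s := Finset.sum_congr rfl fun y _ => by
        rw [← Equiv.sum_comp (Equiv.addRight y)]
        simp only [Equiv.coe_addRight, hshift]
    _ = ∑ s, (∑ y, a (s + y) * conj (a y)) * χ s := by
        rw [Finset.sum_comm]
        simp only [Finset.sum_mul]
    _ = c := by simp [hcorr]

theorem circulant_eigenvalue_mul_conj {d : ℕ} [NeZero d] {a : ZMod d → ℂ}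
    {H : Matrix (Fin d) (Fin d) ℂ} (ha : ∀ i j, H i j = a ((i : ℕ) - (j : ℕ)))
    (hH : H * H.conjTranspose = (d : ℂ) • 1) {ζ : ℂ} (hζ : ζ ^ d = 1) (k : ℕ) :
    (∑ j ∈ Finset.range d, a j * ζ ^ (j * k)) *
      conj (∑ j ∈ Finset.range d, a j * ζ ^ (j * k)) = d := by
  have hζk : (ζ ^ k) ^ d = 1 := by rw [pow_right_comm, hζ, one_pow]
  let χ := AddChar.zmodChar d hζk
  have hsum : ∑ j ∈ Finset.range d, a j * ζ ^ (j * k) = ∑ x, a x * χ x := by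
    simp_rw [← ZMod.sum_range_natCast d (fun x => a x * χ x), χ, AddChar.zmodChar_apply',
      ← pow_mul, mul_comm k]
  rw [hsum]
  exact AddChar.sum_mul_mul_conj_sum a d (sum_mul_conj_eq_of_circulant ha hH) χ

theorem IsPrimitiveRoot.sum_mem_adjoin_int {L : Type*} [CommRing L] [IsDomain L] {ζ : L}
    {d : ℕ} [NeZero d] (hζ : IsPrimitiveRoot ζ d) {ι : Type*} {s : Finset ι} {f : ι → L}
    (hf : ∀ i ∈ s, f i ^ d = 1) : ∑ i ∈ s, f i ∈ Algebra.adjoin ℤ {ζ} :=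
  Subalgebra.sum_mem _ fun i hi => by
    obtain ⟨j, -, hj⟩ := hζ.eq_pow_of_pow_eq_one (hf i hi)
    exact hj ▸ pow_mem (Algebra.self_mem_adjoin_singleton ℤ ζ) j

theorem sub_one_mem_of_pow_prime_pow_eq_one {S : Type*} [CommRing S] {p k : ℕ} (hp : p.Prime)
    {x : S} (hx : x ^ p ^ k = 1) {Q : Ideal S} [Q.IsPrime] (hpQ : (p : S) ∈ Q) : x - 1 ∈ Q := by
  have : CharP (S ⧸ Q) p := (CharP.charP_iff_prime_eq_zero hp).2 <| by
    rw [← map_natCast (Ideal.Quotient.mk Q)]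
    exact Ideal.Quotient.eq_zero_iff_mem.2 hpQ
  have : Fact p.Prime := ⟨hp⟩
  have h := (ExpChar.pow_prime_pow_mul_eq_one_iff p k 1 (Ideal.Quotient.mk Q x)).1
    (by rw [mul_one, ← map_pow, hx, map_one])
  rwa [pow_one, ← map_one (Ideal.Quotient.mk Q), Ideal.Quotient.eq] at h

theorem eq_span_sub_one_of_natCast_mem {S : Type*} [CommRing S] [Ring.DimensionLEOne S]
    {p k : ℕ} (hp : p.Prime) {ζ : S} (hζ : ζ ^ p ^ k = 1) (hπ : Prime (ζ - 1))
    (Q : Ideal S) [Q.IsPrime] (hpQ : (p : S) ∈ Q) :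
    Q = Ideal.span {ζ - 1} := by
  have hmax : (Ideal.span {ζ - 1}).IsMaximal :=
    ((Ideal.span_singleton_prime hπ.ne_zero).2 hπ).isMaximal (by simpa using hπ.ne_zero)
  exact (hmax.eq_of_le Ideal.IsPrime.ne_top' ((Ideal.span_singleton_le_iff_mem Q).2
    (sub_one_mem_of_pow_prime_pow_eq_one hp hζ hpQ))).symm

section Dedekind

variable {S : Type*} [CommRing S] [IsDedekindDomain S]

theorem Ideal.exists_eq_pow_of_forall_isPrime_le {J 𝔭 : Ideal S} (hJ : J ≠ ⊥)
    (h : ∀ Q : Ideal S, Q.IsPrime → J ≤ Q → Q = 𝔭) : ∃ v : ℕ, J = 𝔭 ^ v := by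
  obtain ⟨v, hv⟩ :=
    UniqueFactorizationMonoid.exists_associated_prime_pow_of_unique_normalized_factor
      (fun {Q} hQ => h Q (Ideal.isPrime_of_prime
        (UniqueFactorizationMonoid.prime_of_normalized_factor Q hQ))
        (Ideal.le_of_dvd (UniqueFactorizationMonoid.dvd_of_mem_normalizedFactors hQ))) hJ
  exact ⟨v, (associated_iff_eq.mp hv).symm⟩

theorem span_singleton_eq_pow_of_dvd_prime_pow [CharZero S] {p k N : ℕ} (hp : p.Prime)
    {ζ : S} (hζ : ζ ^ p ^ k = 1) (hπ : Prime (ζ - 1)) {α : S} (hα : α ∣ (p : S) ^ N)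
    (𝔭 : Ideal S) [𝔭.IsPrime] (hp𝔭 : (p : S) ∈ 𝔭) : ∃ v : ℕ, Ideal.span {α} = 𝔭 ^ v := by
  refine Ideal.exists_eq_pow_of_forall_isPrime_le ?_ fun Q hQ hαQ => ?_
  · exact Ideal.span_singleton_eq_bot.not.2 <|
      ne_zero_of_dvd_ne_zero (pow_ne_zero _ (Nat.cast_ne_zero.2 hp.ne_zero)) hα
  · have hpQ : (p : S) ∈ Q := hQ.mem_of_pow_mem N
      (Ideal.mem_of_dvd _ hα ((Ideal.span_singleton_le_iff_mem Q).1 hαQ))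
    rw [eq_span_sub_one_of_natCast_mem hp hζ hπ Q hpQ,
      eq_span_sub_one_of_natCast_mem hp hζ hπ 𝔭 hp𝔭]

end Dedekind

section Cyclotomic

variable {L : Type*} [Field L] [CharZero L] {ζ : L}

theorem IsPrimitiveRoot.isCyclotomicExtension_adjoin {n : ℕ} [NeZero n]
    (hζ : IsPrimitiveRoot ζ n) : IsCyclotomicExtension {n} ℚ ℚ⟮ζ⟯ := by
  change IsCyclotomicExtension {n} ℚ ℚ⟮ζ⟯.toSubalgebra
  rw [adjoin_simple_toSubalgebra_of_isAlgebraic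
    (hζ.isIntegral (NeZero.pos n)).tower_top.isAlgebraic]
  exact hζ.adjoin_isCyclotomicExtension ℚ

noncomputable def IsPrimitiveRoot.adjoinIntEquivRingOfIntegers {n : ℕ} [NeZero n]
    (hζ : IsPrimitiveRoot ζ n) : Algebra.adjoin ℤ {ζ} ≃ₐ[ℤ] 𝓞 ℚ⟮ζ⟯ :=
  haveI := hζ.isCyclotomicExtension_adjoin
  have hmap : (Algebra.adjoin ℤ {AdjoinSimple.gen ℚ ζ}).map (ℚ⟮ζ⟯.val.restrictScalars ℤ) =
      Algebra.adjoin ℤ {ζ} := by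
    rw [AlgHom.map_adjoin, Set.image_singleton]
    rfl
  (Subalgebra.equivOfEq _ _ hmap).symm.trans <|
    ((Algebra.adjoin ℤ _).equivMapOfInjective _ ℚ⟮ζ⟯.val.injective).symm.trans
      (IsPrimitiveRoot.coe_submonoidClass_iff.mp hζ).adjoinEquivRingOfIntegers

theorem IsPrimitiveRoot.exists_span_eq_pow_of_dvd_prime_pow {p k N : ℕ} (hp : p.Prime)
    (hζ : IsPrimitiveRoot ζ (p ^ (k + 1))) {α : Algebra.adjoin ℤ {ζ}}
    (hα : α ∣ (p : Algebra.adjoin ℤ {ζ}) ^ N) (𝔭 : Ideal (Algebra.adjoin ℤ {ζ})) [𝔭.IsPrime]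
    (hp𝔭 : (p : Algebra.adjoin ℤ {ζ}) ∈ 𝔭) : ∃ v : ℕ, Ideal.span {α} = 𝔭 ^ v := by
  have : Fact p.Prime := ⟨hp⟩
  have := hζ.isCyclotomicExtension_adjoin
  have := IsCyclotomicExtension.numberField {p ^ (k + 1)} ℚ ℚ⟮ζ⟯
  let φ := hζ.adjoinIntEquivRingOfIntegers.toRingEquiv
  have hgen : IsPrimitiveRoot (AdjoinSimple.gen ℚ ζ) (p ^ (k + 1)) :=
    IsPrimitiveRoot.coe_submonoidClass_iff.mp hζ
  have hφα : φ α ∣ (p : 𝓞 ℚ⟮ζ⟯) ^ N := by simpa using map_dvd φ hα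
  obtain ⟨v, hv⟩ := span_singleton_eq_pow_of_dvd_prime_pow hp
    hgen.toInteger_isPrimitiveRoot.pow_eq_one hgen.zeta_sub_one_prime hφα (𝔭.map φ)
    (by simpa using Ideal.mem_map_of_mem φ hp𝔭)
  refine ⟨v, ?_⟩
  rw [← Ideal.comap_map_of_bijective φ φ.bijective (I := Ideal.span {α}), Ideal.map_span,
    Set.image_singleton, hv, ← Ideal.map_pow, Ideal.comap_map_of_bijective φ φ.bijective]

end Cyclotomic

/-- For a circulant `p^n`-Butson Hadamard matrix `H i j = a (i - j)` of
dimension `d = p^(m+n)` and `ζ` a primitive `d`-th root of unity, the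
eigenvalue `α_k = ∑_{j<d} a j ζ^(jk)` lies in `ℤ[ζ]`, and the principal ideal
it generates is a power of any (hence the unique) prime ideal of `ℤ[ζ]` lying
over `p`. -/
theorem circulant_butson_eigenvalue_ideal (p n m : ℕ) (hp : p.Prime)
    (a : ZMod (p ^ (m + n)) → ℂ)
    (H : Matrix (Fin (p ^ (m + n))) (Fin (p ^ (m + n))) ℂ)
    (ha : ∀ i j, H i j = a (((i : ℕ) : ZMod (p ^ (m + n))) -
      ((j : ℕ) : ZMod (p ^ (m + n)))))
    (hH : IsButsonHadamard (p ^ n) (p ^ (m + n)) H)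
    (ζ : ℂ) (hζ : IsPrimitiveRoot ζ (p ^ (m + n))) (k : ℕ) :
    (∑ j ∈ Finset.range (p ^ (m + n)),
        a (j : ZMod (p ^ (m + n))) * ζ ^ (j * k)) ∈ Algebra.adjoin ℤ {ζ} ∧
      ∀ α : Algebra.adjoin ℤ {ζ},
        (α : ℂ) = ∑ j ∈ Finset.range (p ^ (m + n)),
            a (j : ZMod (p ^ (m + n))) * ζ ^ (j * k) →
          ∀ 𝔭 : Ideal (Algebra.adjoin ℤ {ζ}), 𝔭.IsPrime →
            (p : Algebra.adjoin ℤ {ζ}) ∈ 𝔭 →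
              ∃ v : ℕ, Ideal.span {α} = 𝔭 ^ v := by
  have : NeZero (p ^ (m + n)) := ⟨pow_ne_zero _ hp.ne_zero⟩
  have hroot : ∀ j : ℕ, (a j * ζ ^ (j * k)) ^ p ^ (m + n) = 1 := fun j => by
    rw [mul_pow, pow_right_comm _ (j * k), hζ.pow_eq_one, one_pow, mul_one]
    exact orderOf_dvd_iff_pow_eq_one.1 <| (orderOf_dvd_of_pow_eq_one
      (hH.pow_eq_one_of_circulant ha j)).trans (pow_dvd_pow p (Nat.le_add_left n m))
  refine ⟨hζ.sum_mem_adjoin_int fun j _ => hroot j, fun α hα 𝔭 _ hp𝔭 => ?_⟩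
  have hconj : conj (α : ℂ) ∈ Algebra.adjoin ℤ {ζ} := by
    rw [hα, map_sum]
    exact hζ.sum_mem_adjoin_int fun j _ => by rw [← map_pow, hroot, map_one]
  have hdvd : α ∣ (p : Algebra.adjoin ℤ {ζ}) ^ (m + n) :=
    Dvd.intro ⟨_, hconj⟩ <| Subtype.ext <| by
      push_cast
      rw [hα, circulant_eigenvalue_mul_conj ha hH.2 hζ.pow_eq_one, Nat.cast_pow]
  by_cases h0 : m + n = 0
  · refine ⟨0, ?_⟩
    rw [pow_zero, Ideal.one_eq_top, Ideal.span_singleton_eq_top]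
    exact isUnit_of_dvd_one (by simpa [h0] using hdvd)
  · obtain ⟨e, he⟩ := Nat.exists_eq_add_one_of_ne_zero h0
    rw [he] at hζ
    exact hζ.exists_span_eq_pow_of_dvd_prime_pow hp hdvd 𝔭 hp𝔭
end
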